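/- arXiv:1607.06870 — 5 statements merged into one kernel-verified Lean document; each statement's English description precedes it below -/
import Mathlib

section
/- Let 1 < p, q < ∞ and let u, v be weights with (u,v) ∈ Fourier(p,q). Then there is a constant C such that for every bounded measurable set E ⊆ ℝⁿ, every μ ∈ ℝⁿ with −μ ∈ E, every τ ∈ ℝⁿ, and every nonnegative f ∈ L¹(ℝⁿ) vanishing almost everywhere outside E: (∫_E f(x) dx) · u((E+μ)° + τ)^{1/q} ≤ C (∫_E f(x)^p v(x) dx)^{1/p}; moreover, for every nonnegative g ∈ L¹(ℝⁿ) vanishing almost everywhere outside (E+μ)° + τ: (∫ g(x) dx) · u(E)^{1/q} ≤ C (∫ g(x)^p v(x) dx)^{1/p}. -/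
open MeasureTheory ENNReal Set Bornology Pointwise

noncomputable section

abbrev Euc (n : ℕ) := EuclideanSpace ℝ (Fin n)

/-- The Fourier transform `f̂(z) = ∫ f(x) e^{-i x·z} dx`. -/
def ftrans {n : ℕ} (f : Euc n → ℂ) (z : Euc n) : ℂ :=
  ∫ x : Euc n, f x * Complex.exp (-(Complex.I * ((inner ℝ x z : ℝ) : ℂ)))

/-- A weight: nonnegative, measurable, locally integrable. -/
def IsWeight {n : ℕ} (u : Euc n → ℝ) : Prop :=
  Measurable u ∧ (∀ x, 0 ≤ u x) ∧ LocallyIntegrable u volume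

/-- `u(A) = ∫_A u`, as a value in `ℝ≥0∞`. -/
def wMeas {n : ℕ} (u : Euc n → ℝ) (A : Set (Euc n)) : ℝ≥0∞ :=
  ∫⁻ x in A, ENNReal.ofReal (u x)

/-- The polarSet of a set: `E° = {z : |x·z| ≤ 1 for all x ∈ E}`. -/
def polarSet {n : ℕ} (E : Set (Euc n)) : Set (Euc n) :=
  {z | ∀ x ∈ E, |(inner ℝ x z : ℝ)| ≤ 1}

/-- The setTranslate `E + τ` of a set. -/
def setTranslate {n : ℕ} (τ : Euc n) (E : Set (Euc n)) : Set (Euc n) :=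
  (fun x => x + τ) '' E

/-- Conjugate exponent `p' = p/(p-1)`. -/
def rconj (p : ℝ) : ℝ := p / (p - 1)

/-- The weight `w = v^{-p'/p}`. -/
def wFun {n : ℕ} (p : ℝ) (v : Euc n → ℝ) : Euc n → ℝ :=
  fun x => v x ^ (-(rconj p) / p)

/-- The weighted Fourier inequality class `Fourier(p,q)`. -/
def FourierPQ {n : ℕ} (p q : ℝ) (u v : Euc n → ℝ) : Prop :=
  ∃ C : ℝ, 0 < C ∧ ∀ f : Euc n → ℂ, Integrable f →
    (∫⁻ z, (‖ftrans f z‖₊ : ℝ≥0∞) ^ q * ENNReal.ofReal (u z)) ^ (1/q) ≤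
      ENNReal.ofReal C * (∫⁻ x, (‖f x‖₊ : ℝ≥0∞) ^ p * ENNReal.ofReal (v x)) ^ (1/p)

/-- Axis-parallel cube with center `c` and half-side `r`. -/
def axisCube {n : ℕ} (c : Euc n) (r : ℝ) : Set (Euc n) :=
  {x | ∀ i, |x i - c i| ≤ r}

/-- An axis-parallel cube. -/
def IsCube {n : ℕ} (Q : Set (Euc n)) : Prop :=
  ∃ (c : Euc n) (r : ℝ), 0 < r ∧ Q = axisCube c r

/-- Comparability of measures: `(μ₁,μ₂) ∈ C(δ)`. -/
def Compar {n : ℕ} (μ₁ μ₂ : Measure (Euc n)) (δ : ℝ) : Prop :=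
  ∃ C : ℝ, 0 < C ∧ ∀ Q : Set (Euc n), IsCube Q → ∀ E ⊆ Q, MeasurableSet E →
    μ₁ E * μ₂ Q ^ δ ≤ ENNReal.ofReal C * (μ₁ Q * μ₂ E ^ δ)

/-- A doubling measure. -/
def Doubling {n : ℕ} (μ : Measure (Euc n)) : Prop :=
  ∃ C : ℝ, 0 < C ∧ ∀ (c : Euc n) (r : ℝ), 0 < r →
    μ (axisCube c (2 * r)) ≤ ENNReal.ofReal C * μ (axisCube c r)

/-- `(u, |·|) ∈ C(δ)`. -/
def ComparWL {n : ℕ} (u : Euc n → ℝ) (δ : ℝ) : Prop :=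
  ∃ C : ℝ, 0 < C ∧ ∀ Q : Set (Euc n), IsCube Q → ∀ E ⊆ Q, MeasurableSet E →
    wMeas u E * volume Q ^ δ ≤ ENNReal.ofReal C * (wMeas u Q * volume E ^ δ)

/-- `(|·|, v) ∈ C(δ)`. -/
def ComparLW {n : ℕ} (v : Euc n → ℝ) (δ : ℝ) : Prop :=
  ∃ C : ℝ, 0 < C ∧ ∀ Q : Set (Euc n), IsCube Q → ∀ E ⊆ Q, MeasurableSet E →
    volume E * wMeas v Q ^ δ ≤ ENNReal.ofReal C * (volume Q * wMeas v E ^ δ)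

/-- The class `N_Q(p,q)`. -/
def NQ {n : ℕ} (p q : ℝ) (u v : Euc n → ℝ) : Prop :=
  ∃ C : ℝ, 0 < C ∧ ∀ Q : Set (Euc n), IsCube Q → ∀ μ : Euc n, -μ ∈ Q → ∀ τ : Euc n,
    wMeas u Q ^ (1/q) * wMeas (wFun p v) (setTranslate τ (polarSet (setTranslate μ Q))) ^ (1 / rconj p)
        ≤ ENNReal.ofReal C ∧
    wMeas u (setTranslate τ (polarSet (setTranslate μ Q))) ^ (1/q) * wMeas (wFun p v) Q ^ (1 / rconj p)
        ≤ ENNReal.ofReal C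

/-- The class `N_{Q'}(p,q)`. -/
def NQ' {n : ℕ} (p q : ℝ) (u v : Euc n → ℝ) : Prop :=
  ∃ C : ℝ, 0 < C ∧ ∀ Q : Set (Euc n), IsCube Q → ∀ μ : Euc n, -μ ∈ Q → ∀ τ : Euc n,
    wMeas u Q ^ (1/q) * volume (polarSet Q)
        ≤ ENNReal.ofReal C * wMeas v (setTranslate τ (polarSet (setTranslate μ Q))) ^ (1/p) ∧
    wMeas u (setTranslate τ (polarSet (setTranslate μ Q))) ^ (1/q) * volume Q
        ≤ ENNReal.ofReal C * wMeas v Q ^ (1/p)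

/-- A rectanguloid centered at the origin. -/
def IsRectanguloid0 {n : ℕ} (R : Set (Euc n)) : Prop :=
  ∃ (b : OrthonormalBasis (Fin n) ℝ (Euc n)) (a : Fin n → ℝ),
    (∀ i, 0 < a i) ∧ R = {x | ∀ i, |(inner ℝ x (b i) : ℝ)| ≤ a i}

/-- An ellipsoid centered at the origin. -/
def IsEllipsoid0 {n : ℕ} (S : Set (Euc n)) : Prop :=
  ∃ T : Euc n ≃ₗ[ℝ] Euc n, S = ⇑T '' Metric.closedBall 0 1


/-!
Modulating `f ≥ 0` to `h(x) = f(x) e^{-i x·a}` keeps its weighted `L^p(v)` norm, while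
`ĥ(z) = ∫ f(x) e^{-i x·(z+a)} dx`. If, on the support of `f`, the phase `x·(z+a)` stays within
`1` of a number depending only on `z`, then `|ĥ(z)| ≥ cos 1 · ∫ f`; if this holds for all `z ∈ S`,
the Fourier inequality gives `cos 1 · (∫ f) · u(S)^{1/q} ≤ C ‖f‖_{L^p(v)}`.
For `f` supported in `E` take `S = (E+μ)° + τ` and `a = -τ`: for `z = y + τ` the phase is
`(x+μ)·y - μ·y` with `|(x+μ)·y| ≤ 1`. For `g` supported in `(E+μ)° + τ` take `S = E` and `a = μ`:
for `x = y + τ` the phase is `y·(z+μ) + τ·(z+μ)` with `|y·(z+μ)| ≤ 1`.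
-/

open Complex

open scoped InnerProductSpace

lemma norm_exp_neg_I_mul_ofReal (s : ℝ) : ‖exp (-(I * s))‖ = 1 := by
  simpa [neg_mul, mul_comm] using norm_exp_ofReal_mul_I (-s)

lemma re_ofReal_mul_exp_neg_I_mul (r s : ℝ) : ((r : ℂ) * exp (-(I * s))).re = r * Real.cos s := by
  have h : -(I * s) = ((-s : ℝ) : ℂ) * I := by push_cast; ring
  rw [h, re_ofReal_mul, exp_ofReal_mul_I_re, Real.cos_neg]

lemma cos_one_pos : 0 < Real.cos 1 :=
  Real.cos_pos_of_mem_Ioo ⟨by linarith [Real.pi_gt_three], by linarith [Real.pi_gt_three]⟩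

section Phase

variable {α : Type*} [MeasurableSpace α] {μ : Measure α}

lemma MeasureTheory.Integrable.ofReal_mul_exp_neg_I_mul {f θ : α → ℝ} (hf : Integrable f μ)
    (hθ : Measurable θ) :
    Integrable (fun x => (f x : ℂ) * exp (-(I * θ x))) μ :=
  hf.ofReal.mul_bdd (Measurable.aestronglyMeasurable (by fun_prop))
    (.of_forall fun x => (norm_exp_neg_I_mul_ofReal (θ x)).le)

lemma norm_integral_mul_exp_neg_I_mul_add (f θ : α → ℝ) (c : ℝ) :
    ‖∫ x, (f x : ℂ) * exp (-(I * ↑(θ x + c))) ∂μ‖ = ‖∫ x, (f x : ℂ) * exp (-(I * θ x)) ∂μ‖ := by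
  have h : ∀ x, (f x : ℂ) * exp (-(I * ↑(θ x + c))) =
      exp (-(I * c)) * (f x * exp (-(I * θ x))) := by
    intro x
    rw [mul_left_comm, ← exp_add]
    push_cast
    ring_nf
  simp only [h, integral_const_mul, norm_mul, norm_exp_neg_I_mul_ofReal, one_mul]

/-- After removing the constant phase `c`, the real part of the integral is
`∫ f cos (θ + c) ≥ cos 1 ∫ f`. -/
lemma cos_one_mul_integral_le_norm_integral_mul_exp {f θ : α → ℝ} (hf : Integrable f μ)
    (hf0 : ∀ x, 0 ≤ f x) (hθ : Measurable θ) (c : ℝ)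
    (hbd : ∀ᵐ x ∂μ, f x ≠ 0 → |θ x + c| ≤ 1) :
    Real.cos 1 * ∫ x, f x ∂μ ≤ ‖∫ x, (f x : ℂ) * exp (-(I * θ x)) ∂μ‖ := by
  have hint := hf.ofReal_mul_exp_neg_I_mul (hθ.add_const c)
  calc Real.cos 1 * ∫ x, f x ∂μ = ∫ x, Real.cos 1 * f x ∂μ := (integral_const_mul _ _).symm
    _ ≤ ∫ x, ((f x : ℂ) * exp (-(I * ↑(θ x + c)))).re ∂μ := by
        refine integral_mono_ae (hf.const_mul _) hint.re ?_
        filter_upwards [hbd] with x hx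
        rw [re_ofReal_mul_exp_neg_I_mul, mul_comm]
        rcases eq_or_ne (f x) 0 with h | h
        · simp [h]
        · refine mul_le_mul_of_nonneg_left ?_ (hf0 x)
          rw [← Real.cos_abs (θ x + c)]
          exact Real.cos_le_cos_of_nonneg_of_le_pi (abs_nonneg _)
            (by linarith [Real.pi_gt_three]) (hx h)
    _ = (∫ x, (f x : ℂ) * exp (-(I * ↑(θ x + c))) ∂μ).re := integral_re hint
    _ ≤ ‖∫ x, (f x : ℂ) * exp (-(I * ↑(θ x + c))) ∂μ‖ := re_le_norm _
    _ = ‖∫ x, (f x : ℂ) * exp (-(I * θ x)) ∂μ‖ := norm_integral_mul_exp_neg_I_mul_add f θ c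

end Phase

variable {n : ℕ}

def modulate (f : Euc n → ℝ) (a : Euc n) (x : Euc n) : ℂ :=
  f x * exp (-(I * ⟪x, a⟫_ℝ))

lemma enorm_modulate {f : Euc n → ℝ} (hf0 : ∀ x, 0 ≤ f x) (a x : Euc n) :
    ‖modulate f a x‖ₑ = ENNReal.ofReal (f x) := by
  rw [← ofReal_norm, modulate, norm_mul, norm_exp_neg_I_mul_ofReal, mul_one, norm_real,
    Real.norm_of_nonneg (hf0 x)]

lemma ftrans_modulate (f : Euc n → ℝ) (a z : Euc n) :
    ftrans (modulate f a) z = ∫ x, (f x : ℂ) * exp (-(I * ⟪x, z + a⟫_ℝ)) := by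
  refine integral_congr_ae (.of_forall fun x => ?_)
  simp only [modulate, mul_assoc, ← exp_add, inner_add_right]
  push_cast
  ring_nf

lemma cos_one_mul_integral_le_norm_ftrans_modulate {f : Euc n → ℝ} (hf : Integrable f)
    (hf0 : ∀ x, 0 ≤ f x) {T : Set (Euc n)} (hfT : ∀ᵐ x, x ∉ T → f x = 0) {a z : Euc n} {c : ℝ}
    (hT : ∀ x ∈ T, |⟪x, z + a⟫_ℝ + c| ≤ 1) :
    Real.cos 1 * ∫ x, f x ≤ ‖ftrans (modulate f a) z‖ := by
  rw [ftrans_modulate]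
  refine cos_one_mul_integral_le_norm_integral_mul_exp hf hf0 (by fun_prop) c ?_
  filter_upwards [hfT] with x hx hfx
  exact hT x (not_not.1 (mt hx hfx))

lemma mul_wMeas_rpow_le_of_le_enorm_ftrans {p q C : ℝ} (hq : 0 < q) {u v : Euc n → ℝ}
    {h : Euc n → ℂ} (hh : Integrable h)
    (hF : ∀ f : Euc n → ℂ, Integrable f →
      (∫⁻ z, (‖ftrans f z‖₊ : ℝ≥0∞) ^ q * ENNReal.ofReal (u z)) ^ (1/q) ≤
        ENNReal.ofReal C * (∫⁻ x, (‖f x‖₊ : ℝ≥0∞) ^ p * ENNReal.ofReal (v x)) ^ (1/p))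
    {S : Set (Euc n)} (hS : MeasurableSet S) {b : ℝ≥0∞} (hb : ∀ z ∈ S, b ≤ ‖ftrans h z‖ₑ) :
    b * wMeas u S ^ (1/q) ≤
      ENNReal.ofReal C * (∫⁻ x, ‖h x‖ₑ ^ p * ENNReal.ofReal (v x)) ^ (1/p) := by
  have hS_le : b ^ q * wMeas u S ≤ ∫⁻ z, ‖ftrans h z‖ₑ ^ q * ENNReal.ofReal (u z) :=
    calc b ^ q * wMeas u S ≤ ∫⁻ z in S, b ^ q * ENNReal.ofReal (u z) := lintegral_const_mul_le _ _
      _ ≤ ∫⁻ z in S, ‖ftrans h z‖ₑ ^ q * ENNReal.ofReal (u z) :=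
          setLIntegral_mono' hS fun z hz => by gcongr; exact hb z hz
      _ ≤ _ := setLIntegral_le_lintegral _ _
  calc b * wMeas u S ^ (1/q) = (b ^ q * wMeas u S) ^ (1/q) := by
        rw [ENNReal.mul_rpow_of_nonneg _ _ (by positivity), one_div, ENNReal.rpow_rpow_inv hq.ne']
    _ ≤ _ := (ENNReal.rpow_le_rpow hS_le (by positivity)).trans (hF h hh)

lemma FourierPQ.exists_ofReal_integral_mul_wMeas_rpow_le {p q : ℝ} (hq : 0 < q)
    {u v : Euc n → ℝ} (hF : FourierPQ p q u v) :
    ∃ C : ℝ, 0 < C ∧ ∀ {S T : Set (Euc n)}, MeasurableSet S → ∀ (a : Euc n) (c : Euc n → ℝ),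
      (∀ z ∈ S, ∀ x ∈ T, |⟪x, z + a⟫_ℝ + c z| ≤ 1) →
      ∀ f : Euc n → ℝ, Integrable f → (∀ x, 0 ≤ f x) → (∀ᵐ x, x ∉ T → f x = 0) →
      ENNReal.ofReal (∫ x, f x) * wMeas u S ^ (1/q) ≤
        ENNReal.ofReal C * (∫⁻ x, ENNReal.ofReal (f x) ^ p * ENNReal.ofReal (v x)) ^ (1/p) := by
  obtain ⟨C, hC, hF⟩ := hF
  refine ⟨C / Real.cos 1, div_pos hC cos_one_pos, fun hS a c hST f hf hf0 hfT => ?_⟩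
  have hmod : Integrable (modulate f a) := hf.ofReal_mul_exp_neg_I_mul (by fun_prop)
  have key := mul_wMeas_rpow_le_of_le_enorm_ftrans hq hmod hF hS
    (b := ENNReal.ofReal (Real.cos 1 * ∫ x, f x)) fun z hz => by
      rw [← ofReal_norm]
      exact ENNReal.ofReal_le_ofReal
        (cos_one_mul_integral_le_norm_ftrans_modulate hf hf0 hfT (hST z hz))
  simp only [enorm_modulate hf0] at key
  rw [ENNReal.ofReal_mul cos_one_pos.le, mul_assoc,
    ENNReal.mul_le_iff_le_inv (by simp [cos_one_pos]) ENNReal.ofReal_ne_top] at key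
  rwa [ENNReal.ofReal_div_of_pos cos_one_pos, ENNReal.div_eq_inv_mul, mul_assoc]

lemma isClosed_polarSet (E : Set (Euc n)) : IsClosed (polarSet E) := by
  simp only [polarSet, ofPred_forall]
  exact isClosed_biInter fun x _ => isClosed_le (by fun_prop) continuous_const

lemma measurableSet_setTranslate_polarSet (τ μ : Euc n) (E : Set (Euc n)) :
    MeasurableSet (setTranslate τ (polarSet (setTranslate μ E))) :=
  ((Homeomorph.addRight τ).isClosedMap _ (isClosed_polarSet _)).measurableSet

theorem stmt2_general (n : ℕ) (p q : ℝ) (hq : 1 < q)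
    (u v : Euc n → ℝ)
    (hF : FourierPQ p q u v) :
    ∃ C : ℝ, 0 < C ∧ ∀ E : Set (Euc n), IsBounded E → MeasurableSet E →
      ∀ μ : Euc n, -μ ∈ E → ∀ τ : Euc n,
      (∀ f : Euc n → ℝ, Integrable f → (∀ x, 0 ≤ f x) →
        (∀ᵐ x ∂(volume : Measure (Euc n)), x ∉ E → f x = 0) →
        ENNReal.ofReal (∫ x, f x) * wMeas u (setTranslate τ (polarSet (setTranslate μ E))) ^ (1/q) ≤
          ENNReal.ofReal C *
            (∫⁻ x, ENNReal.ofReal (f x) ^ p * ENNReal.ofReal (v x)) ^ (1/p)) ∧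
      (∀ g : Euc n → ℝ, Integrable g → (∀ x, 0 ≤ g x) →
        (∀ᵐ x ∂(volume : Measure (Euc n)), x ∉ setTranslate τ (polarSet (setTranslate μ E)) → g x = 0) →
        ENNReal.ofReal (∫ x, g x) * wMeas u E ^ (1/q) ≤
          ENNReal.ofReal C *
            (∫⁻ x, ENNReal.ofReal (g x) ^ p * ENNReal.ofReal (v x)) ^ (1/p)) := by
  obtain ⟨C, hC, hUP⟩ := hF.exists_ofReal_integral_mul_wMeas_rpow_le (zero_lt_one.trans hq)
  refine ⟨C, hC, fun E _ hE μ _ τ => ⟨fun f hf hf0 hfE => ?_, fun g hg hg0 hgP => ?_⟩⟩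
  · refine hUP (measurableSet_setTranslate_polarSet τ μ E) (-τ) (fun z => ⟪μ, z + -τ⟫_ℝ) ?_
      f hf hf0 hfE
    rintro _ ⟨y, hy, rfl⟩ x hx
    rw [add_neg_cancel_right, ← inner_add_left]
    exact hy (x + μ) ⟨x, hx, rfl⟩
  · refine hUP hE μ (fun z => -⟪τ, z + μ⟫_ℝ) ?_ g hg hg0 hgP
    rintro z hz _ ⟨y, hy, rfl⟩
    rw [inner_add_left, add_neg_cancel_right, real_inner_comm]
    exact hy (z + μ) ⟨z, hz, rfl⟩

theorem stmt2 (n : ℕ) (hn : 1 ≤ n) (p q : ℝ) (hp : 1 < p) (hq : 1 < q)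
    (u v : Euc n → ℝ) (hu : IsWeight u) (hv : IsWeight v)
    (hF : FourierPQ p q u v) :
    ∃ C : ℝ, 0 < C ∧ ∀ E : Set (Euc n), IsBounded E → MeasurableSet E →
      ∀ μ : Euc n, -μ ∈ E → ∀ τ : Euc n,
      (∀ f : Euc n → ℝ, Integrable f → (∀ x, 0 ≤ f x) →
        (∀ᵐ x ∂(volume : Measure (Euc n)), x ∉ E → f x = 0) →
        ENNReal.ofReal (∫ x, f x) * wMeas u (setTranslate τ (polarSet (setTranslate μ E))) ^ (1/q) ≤
          ENNReal.ofReal C *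
            (∫⁻ x, ENNReal.ofReal (f x) ^ p * ENNReal.ofReal (v x)) ^ (1/p)) ∧
      (∀ g : Euc n → ℝ, Integrable g → (∀ x, 0 ≤ g x) →
        (∀ᵐ x ∂(volume : Measure (Euc n)), x ∉ setTranslate τ (polarSet (setTranslate μ E)) → g x = 0) →
        ENNReal.ofReal (∫ x, g x) * wMeas u E ^ (1/q) ≤
          ENNReal.ofReal C *
            (∫⁻ x, ENNReal.ofReal (g x) ^ p * ENNReal.ofReal (v x)) ^ (1/p)) :=
  stmt2_general n p q hq u v hF
end
end

section
/- Let 1 < p, q < ∞, let u, v be weights with v > 0 almost everywhere, and set w = v^{−p'/p}. Suppose there is a constant C such that for every bounded measurable set E ⊆ ℝⁿ, every μ ∈ ℝⁿ with −μ ∈ E, and every τ ∈ ℝⁿ: u((E+μ)° + τ)^{1/q} · w(E)^{1/p'} ≤ C and u(E)^{1/q} · w((E+μ)° + τ)^{1/p'} ≤ C. Then for every such E, μ, τ: (∫_{(E+μ)°+τ} |f̂(z)|^q u(z) dz)^{1/q} ≤ C (∫_E |f(x)|^p v(x) dx)^{1/p} for every f ∈ L¹(ℝⁿ) vanishing almost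 everywhere outside E, and (∫_E |ĝ(z)|^q u(z) dz)^{1/q} ≤ C (∫ |g(x)|^p v(x) dx)^{1/p} for every g ∈ L¹(ℝⁿ) vanishing almost everywhere outside (E+μ)° + τ. -/
open MeasureTheory ENNReal Set Bornology Pointwise

noncomputable section

/-!
The Fourier transform of an `f` vanishing outside `A` is bounded pointwise by `∫_A |f|`, and
Hölder's inequality for the splitting `|f| = (|f| v^{1/p}) · v^{-1/p}` bounds this by
`‖f‖_{L^p(v)} w(A)^{1/p'}`. Integrating the `q`-th power of this constant bound against `u` over
`B` gives `u(B)^{1/q} w(A)^{1/p'} ‖f‖_{L^p(v)}`, and the hypothesis bounds the product of the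
weighted measures by `C`, for `(A, B) = (E, (E + μ)° + τ)` and for the swapped pair.
-/

lemma enorm_ftrans_le_setLIntegral {n : ℕ} {f : Euc n → ℂ} {A : Set (Euc n)}
    (hfA : ∀ᵐ x ∂(volume : Measure (Euc n)), x ∉ A → f x = 0) (z : Euc n) :
    ‖ftrans f z‖ₑ ≤ ∫⁻ x in A, ‖f x‖ₑ := by
  rw [ftrans, ← setIntegral_eq_integral_of_ae_compl_eq_zero (s := A)
    (by filter_upwards [hfA] with x hx hxA using by simp [hx hxA])]
  refine (enorm_integral_le_lintegral_enorm _).trans_eq (lintegral_congr fun x => ?_)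
  rw [enorm_mul, ← ofReal_norm (Complex.exp _), neg_mul_eq_mul_neg, ← Complex.ofReal_neg,
    Complex.norm_exp_I_mul_ofReal, ENNReal.ofReal_one, mul_one]

lemma lintegral_enorm_le_weighted_holder {α E : Type*} [MeasurableSpace α]
    [NormedAddCommGroup E] {μ : Measure α} {p : ℝ} (hp : 1 < p) {v : α → ℝ}
    (hv : AEMeasurable v μ) (hv_pos : ∀ᵐ x ∂μ, 0 < v x) {f : α → E}
    (hf : AEStronglyMeasurable f μ) :
    ∫⁻ x, ‖f x‖ₑ ∂μ ≤
      (∫⁻ x, ‖f x‖ₑ ^ p * ENNReal.ofReal (v x) ∂μ) ^ (1 / p) *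
        (∫⁻ x, ENNReal.ofReal (v x ^ (-rconj p / p)) ∂μ) ^ (1 / rconj p) := by
  set F : α → ℝ≥0∞ := fun x => ‖f x‖ₑ * ENNReal.ofReal (v x) ^ (1 / p)
  set G : α → ℝ≥0∞ := fun x => ENNReal.ofReal (v x) ^ (-(1 / p))
  have hsplit : (fun x => ‖f x‖ₑ) =ᵐ[μ] F * G := by
    filter_upwards [hv_pos] with x hx
    have h0 : ENNReal.ofReal (v x) ^ (1 / p) ≠ 0 :=
      (ENNReal.rpow_pos (ENNReal.ofReal_pos.2 hx) ENNReal.ofReal_ne_top).ne'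
    have htop : ENNReal.ofReal (v x) ^ (1 / p) ≠ ⊤ :=
      ENNReal.rpow_ne_top_of_nonneg (by positivity) ENNReal.ofReal_ne_top
    simp only [F, G, Pi.mul_apply]
    rw [ENNReal.rpow_neg, mul_assoc, ENNReal.mul_inv_cancel h0 htop, mul_one]
  have hF : ∫⁻ x, F x ^ p ∂μ = ∫⁻ x, ‖f x‖ₑ ^ p * ENNReal.ofReal (v x) ∂μ := by
    refine lintegral_congr fun x => ?_
    rw [ENNReal.mul_rpow_of_nonneg _ _ (by positivity), ← ENNReal.rpow_mul,
      one_div_mul_cancel (by positivity), ENNReal.rpow_one]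
  have hG : ∫⁻ x, G x ^ rconj p ∂μ = ∫⁻ x, ENNReal.ofReal (v x ^ (-rconj p / p)) ∂μ := by
    refine lintegral_congr_ae ?_
    filter_upwards [hv_pos] with x hx
    rw [← ENNReal.rpow_mul, show -(1 / p) * rconj p = -rconj p / p by ring,
      ENNReal.ofReal_rpow_of_pos hx]
  have hv' := hv.ennreal_ofReal
  calc ∫⁻ x, ‖f x‖ₑ ∂μ = ∫⁻ x, (F * G) x ∂μ := lintegral_congr_ae hsplit
    _ ≤ (∫⁻ x, F x ^ p ∂μ) ^ (1 / p) * (∫⁻ x, G x ^ rconj p ∂μ) ^ (1 / rconj p) :=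
      ENNReal.lintegral_mul_le_Lp_mul_Lq μ (Real.HolderConjugate.conjExponent hp)
        (hf.enorm.mul (hv'.pow_const _)) (hv'.pow_const _)
    _ = _ := by rw [hF, hG]

lemma weighted_ftrans_le_of_wMeas_mul_le {n : ℕ} {p q : ℝ} (hp : 1 < p) (hq : 0 < q)
    {u v : Euc n → ℝ} (hu : AEMeasurable u) (hv : AEMeasurable v)
    (hv_pos : ∀ᵐ x ∂(volume : Measure (Euc n)), 0 < v x) {C : ℝ} {A B : Set (Euc n)}
    (hAB : wMeas u B ^ (1 / q) * wMeas (wFun p v) A ^ (1 / rconj p) ≤ ENNReal.ofReal C)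
    {f : Euc n → ℂ} (hf : AEStronglyMeasurable f)
    (hfA : ∀ᵐ x ∂(volume : Measure (Euc n)), x ∉ A → f x = 0) :
    (∫⁻ z in B, ‖ftrans f z‖ₑ ^ q * ENNReal.ofReal (u z)) ^ (1 / q) ≤
      ENNReal.ofReal C * (∫⁻ x in A, ‖f x‖ₑ ^ p * ENNReal.ofReal (v x)) ^ (1 / p) := by
  set L := (∫⁻ x in A, ‖f x‖ₑ ^ p * ENNReal.ofReal (v x)) ^ (1 / p)
  set W := wMeas (wFun p v) A ^ (1 / rconj p)
  have hpointwise (z : Euc n) : ‖ftrans f z‖ₑ ≤ L * W :=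
    (enorm_ftrans_le_setLIntegral hfA z).trans <|
      lintegral_enorm_le_weighted_holder hp hv.restrict (ae_restrict_of_ae hv_pos) hf.restrict
  have hint : ∫⁻ z in B, ‖ftrans f z‖ₑ ^ q * ENNReal.ofReal (u z) ≤ (L * W) ^ q * wMeas u B := by
    rw [wMeas, ← lintegral_const_mul'' _ hu.restrict.ennreal_ofReal]
    exact lintegral_mono fun z => by gcongr; exact hpointwise z
  calc (∫⁻ z in B, ‖ftrans f z‖ₑ ^ q * ENNReal.ofReal (u z)) ^ (1 / q)
      ≤ ((L * W) ^ q * wMeas u B) ^ (1 / q) := by gcongr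
    _ = wMeas u B ^ (1 / q) * W * L := by
      rw [ENNReal.mul_rpow_of_nonneg _ _ (by positivity), ← ENNReal.rpow_mul,
        mul_one_div_cancel hq.ne', ENNReal.rpow_one]
      ring
    _ ≤ ENNReal.ofReal C * L := by gcongr

theorem stmt4_general (n : ℕ) (p q : ℝ) (hp : 1 < p) (hq : 1 < q)
    (u v : Euc n → ℝ) (hu : IsWeight u) (hv : IsWeight v)
    (hvpos : ∀ᵐ x ∂(volume : Measure (Euc n)), 0 < v x)
    (C : ℝ)
    (hyp : ∀ E : Set (Euc n), IsBounded E → MeasurableSet E →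
      ∀ μ : Euc n, -μ ∈ E → ∀ τ : Euc n,
      wMeas u (setTranslate τ (polarSet (setTranslate μ E))) ^ (1/q) * wMeas (wFun p v) E ^ (1 / rconj p)
          ≤ ENNReal.ofReal C ∧
      wMeas u E ^ (1/q) * wMeas (wFun p v) (setTranslate τ (polarSet (setTranslate μ E))) ^ (1 / rconj p)
          ≤ ENNReal.ofReal C) :
    ∀ E : Set (Euc n), IsBounded E → MeasurableSet E →
      ∀ μ : Euc n, -μ ∈ E → ∀ τ : Euc n,
      (∀ f : Euc n → ℂ, Integrable f →
        (∀ᵐ x ∂(volume : Measure (Euc n)), x ∉ E → f x = 0) →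
        (∫⁻ z in setTranslate τ (polarSet (setTranslate μ E)),
            (‖ftrans f z‖₊ : ℝ≥0∞) ^ q * ENNReal.ofReal (u z)) ^ (1/q) ≤
          ENNReal.ofReal C *
            (∫⁻ x in E, (‖f x‖₊ : ℝ≥0∞) ^ p * ENNReal.ofReal (v x)) ^ (1/p)) ∧
      (∀ g : Euc n → ℂ, Integrable g →
        (∀ᵐ x ∂(volume : Measure (Euc n)), x ∉ setTranslate τ (polarSet (setTranslate μ E)) → g x = 0) →
        (∫⁻ z in E, (‖ftrans g z‖₊ : ℝ≥0∞) ^ q * ENNReal.ofReal (u z)) ^ (1/q) ≤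
          ENNReal.ofReal C *
            (∫⁻ x, (‖g x‖₊ : ℝ≥0∞) ^ p * ENNReal.ofReal (v x)) ^ (1/p)) := by
  intro E hE_bdd hE μ hμ τ
  obtain ⟨hpolar_E, hE_polar⟩ := hyp E hE_bdd hE μ hμ τ
  have hq0 : 0 < q := zero_lt_one.trans hq
  refine ⟨fun f hf hfE => ?_, fun g hg hgF => ?_⟩
  · exact weighted_ftrans_le_of_wMeas_mul_le hp hq0 hu.1.aemeasurable hv.1.aemeasurable hvpos
      hpolar_E hf.1 hfE
  · refine (weighted_ftrans_le_of_wMeas_mul_le hp hq0 hu.1.aemeasurable hv.1.aemeasurable hvpos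
      hE_polar hg.1 hgF).trans ?_
    exact mul_le_mul_right (ENNReal.rpow_le_rpow (setLIntegral_le_lintegral _ _) (by positivity)) _

theorem stmt4 (n : ℕ) (hn : 1 ≤ n) (p q : ℝ) (hp : 1 < p) (hq : 1 < q)
    (u v : Euc n → ℝ) (hu : IsWeight u) (hv : IsWeight v)
    (hvpos : ∀ᵐ x ∂(volume : Measure (Euc n)), 0 < v x)
    (C : ℝ) (hC : 0 < C)
    (hyp : ∀ E : Set (Euc n), IsBounded E → MeasurableSet E →
      ∀ μ : Euc n, -μ ∈ E → ∀ τ : Euc n,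
      wMeas u (setTranslate τ (polarSet (setTranslate μ E))) ^ (1/q) * wMeas (wFun p v) E ^ (1 / rconj p)
          ≤ ENNReal.ofReal C ∧
      wMeas u E ^ (1/q) * wMeas (wFun p v) (setTranslate τ (polarSet (setTranslate μ E))) ^ (1 / rconj p)
          ≤ ENNReal.ofReal C) :
    ∀ E : Set (Euc n), IsBounded E → MeasurableSet E →
      ∀ μ : Euc n, -μ ∈ E → ∀ τ : Euc n,
      (∀ f : Euc n → ℂ, Integrable f →
        (∀ᵐ x ∂(volume : Measure (Euc n)), x ∉ E → f x = 0) →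
        (∫⁻ z in setTranslate τ (polarSet (setTranslate μ E)),
            (‖ftrans f z‖₊ : ℝ≥0∞) ^ q * ENNReal.ofReal (u z)) ^ (1/q) ≤
          ENNReal.ofReal C *
            (∫⁻ x in E, (‖f x‖₊ : ℝ≥0∞) ^ p * ENNReal.ofReal (v x)) ^ (1/p)) ∧
      (∀ g : Euc n → ℂ, Integrable g →
        (∀ᵐ x ∂(volume : Measure (Euc n)), x ∉ setTranslate τ (polarSet (setTranslate μ E)) → g x = 0) →
        (∫⁻ z in E, (‖ftrans g z‖₊ : ℝ≥0∞) ^ q * ENNReal.ofReal (u z)) ^ (1/q) ≤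
          ENNReal.ofReal C *
            (∫⁻ x, (‖g x‖₊ : ℝ≥0∞) ^ p * ENNReal.ofReal (v x)) ^ (1/p)) :=
  stmt4_general n p q hp hq u v hu hv hvpos C hyp
end
end

section
/- Let n ≥ 2, let 1 < p, q < ∞, let u, v be weights with v > 0 almost everywhere, and set w = v^{−p'/p}. Suppose there is a constant C such that u(R°)^{1/q} · w(nR)^{1/p'} ≤ C and u(nR)^{1/q} · w(R°)^{1/p'} ≤ C for every rectanguloid R centered at the origin. Then there is a constant C' such that u(S°)^{1/q} · w(√n S)^{1/p'} ≤ C' and u(√n S)^{1/q} · w(S°)^{1/p'} ≤ C' for every ellipsoid S centered at the origin. -/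
open MeasureTheory ENNReal Set Bornology Pointwise

noncomputable section

/-!
In an eigenbasis of the Gram operator of `T⁻¹`, the ellipsoid `T(B)` is `{x | ∑ μᵢ xᵢ² ≤ 1}`
with all `μᵢ > 0`. It contains the box `R` with half-axes `(n μᵢ)^(-1/2)` and is contained in
the box with half-axes `μᵢ^(-1/2)`, which is `√n • R`. Hence `S° ⊆ R°` and `√n • S ⊆ n • R`, and
both products of the hypothesis only grow along these inclusions because the exponents are
nonnegative.
-/

open scoped RealInnerProductSpace

section Ellipsoid

variable {E : Type*} [NormedAddCommGroup E] [InnerProductSpace ℝ E]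

theorem LinearEquiv.exists_image_closedBall_eq_sum_sq_le [FiniteDimensional ℝ E] {d : ℕ}
    (hd : Module.finrank ℝ E = d) (T : E ≃ₗ[ℝ] E) :
    ∃ (b : OrthonormalBasis (Fin d) ℝ E) (μ : Fin d → ℝ), (∀ i, 0 < μ i) ∧
      T '' Metric.closedBall 0 1 = {x | ∑ i, μ i * ⟪x, b i⟫ ^ 2 ≤ 1} := by
  set L : E →ₗ[ℝ] E := T.symm.toLinearMap
  have hA := L.isSymmetric_adjoint_comp_self
  set b := hA.eigenvectorBasis hd
  set μ := hA.eigenvalues hd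
  -- `‖L x‖² = ⟪L†L x, x⟫`, expanded in an eigenbasis of `L†L`
  have hnorm : ∀ x, ‖L x‖ ^ 2 = ∑ i, μ i * ⟪x, b i⟫ ^ 2 := fun x => by
    rw [← real_inner_self_eq_norm_sq, ← LinearMap.adjoint_inner_right, ← LinearMap.comp_apply,
      ← b.sum_inner_mul_inner]
    refine Finset.sum_congr rfl fun i _ => ?_
    rw [← hA, hA.apply_eigenvectorBasis, real_inner_smul_left, real_inner_comm x]
    simp only [RCLike.ofReal_real_eq_id, id, μ, b]
    ring
  refine ⟨b, μ, fun i => ?_, ?_⟩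
  · have hb : L (b i) ≠ 0 := by simpa [L] using b.orthonormal.ne_zero i
    have hμ : ‖L (b i)‖ ^ 2 = μ i := by simpa [b.inner_eq_ite] using hnorm (b i)
    exact hμ ▸ pow_pos (norm_pos_iff.2 hb) 2
  · ext x
    rw [T.image_eq_preimage_symm, Set.mem_preimage, mem_closedBall_zero_iff, Set.mem_ofPred_eq,
      ← hnorm, sq_le_one_iff₀ (norm_nonneg _)]
    rfl

variable {ι : Type*} (b : ι → E)

theorem setOf_forall_abs_inner_le_subset_sum_sq_le [Fintype ι] {μ a : ι → ℝ} (hμ : ∀ i, 0 ≤ μ i)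
    (ha : ∑ i, μ i * a i ^ 2 ≤ 1) :
    {x | ∀ i, |⟪x, b i⟫| ≤ a i} ⊆ {x | ∑ i, μ i * ⟪x, b i⟫ ^ 2 ≤ 1} := fun x hx =>
  calc ∑ i, μ i * ⟪x, b i⟫ ^ 2 ≤ ∑ i, μ i * a i ^ 2 :=
        Finset.sum_le_sum fun i _ => mul_le_mul_of_nonneg_left
          (sq_le_sq' (abs_le.mp (hx i)).1 (abs_le.mp (hx i)).2) (hμ i)
    _ ≤ 1 := ha

theorem setOf_sum_sq_le_subset_forall_abs_inner_le [Fintype ι] {μ : ι → ℝ} (hμ : ∀ i, 0 < μ i) :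
    {x | ∑ i, μ i * ⟪x, b i⟫ ^ 2 ≤ 1} ⊆ {x | ∀ i, |⟪x, b i⟫| ≤ √(μ i)⁻¹} := by
  intro x hx i
  have hterm : μ i * ⟪x, b i⟫ ^ 2 ≤ 1 :=
    (Finset.single_le_sum (f := fun j => μ j * ⟪x, b j⟫ ^ 2)
      (fun j _ => by have := hμ j; positivity) (Finset.mem_univ i)).trans hx
  exact Real.abs_le_sqrt (by rwa [← one_div, le_div_iff₀' (hμ i)])

theorem smul_setOf_forall_abs_inner_le {c : ℝ} (hc : 0 < c) (a : ι → ℝ) :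
    c • {x | ∀ i, |⟪x, b i⟫| ≤ a i} = {x | ∀ i, |⟪x, b i⟫| ≤ c * a i} := by
  ext x
  rw [Set.mem_smul_set_iff_inv_smul_mem₀ hc.ne']
  simp only [Set.mem_ofPred_eq, real_inner_smul_left, abs_mul, abs_inv, abs_of_pos hc,
    inv_mul_le_iff₀ hc]

end Ellipsoid

theorem IsEllipsoid0.exists_isRectanguloid0_subset_subset {n : ℕ} (hn : 0 < n)
    {S : Set (Euc n)} (hS : IsEllipsoid0 S) :
    ∃ R, IsRectanguloid0 R ∧ R ⊆ S ∧ S ⊆ √n • R := by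
  obtain ⟨T, rfl⟩ := hS
  obtain ⟨b, μ, hμ, hTS⟩ := T.exists_image_closedBall_eq_sum_sq_le finrank_euclideanSpace_fin
  have hn' : (0 : ℝ) < n := by exact_mod_cast hn
  set a : Fin n → ℝ := fun i => √(n * μ i)⁻¹
  have ha : ∑ i, μ i * a i ^ 2 = 1 := by
    have hμa : ∀ i, μ i * a i ^ 2 = (n : ℝ)⁻¹ := fun i => by
      rw [Real.sq_sqrt (by have := hμ i; positivity), mul_inv, mul_left_comm,
        mul_inv_cancel₀ (hμ i).ne', mul_one]
    simp only [hμa, Finset.sum_const, Finset.card_univ, Fintype.card_fin, nsmul_eq_mul,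
      mul_inv_cancel₀ hn'.ne']
  have hscale : ∀ i, √n * a i = √(μ i)⁻¹ := fun i => by
    rw [← Real.sqrt_mul hn'.le, mul_inv, ← mul_assoc, mul_inv_cancel₀ hn'.ne', one_mul]
  refine ⟨_, ⟨b, a, fun i => by have := hμ i; positivity, rfl⟩, ?_, ?_⟩
  · exact hTS ▸ setOf_forall_abs_inner_le_subset_sum_sq_le b (fun i => (hμ i).le) ha.le
  · rw [hTS, smul_setOf_forall_abs_inner_le b (Real.sqrt_pos.2 hn')]
    simpa only [hscale] using setOf_sum_sq_le_subset_forall_abs_inner_le b hμ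

theorem polarSet_antitone {n : ℕ} : Antitone (polarSet (n := n)) :=
  fun _ _ h _ hz x hx => hz x (h hx)

@[gcongr]
theorem wMeas_mono {n : ℕ} (u : Euc n → ℝ) {A B : Set (Euc n)} (h : A ⊆ B) :
    wMeas u A ≤ wMeas u B :=
  lintegral_mono_set h

theorem rconj_pos {p : ℝ} (hp : 1 < p) : 0 < rconj p :=
  div_pos (by linarith) (by linarith)

theorem stmt5_general (n : ℕ) (hn : 2 ≤ n) (p q : ℝ) (hp : 1 < p) (hq : 1 < q)
    (u v : Euc n → ℝ)
    (hyp : ∃ C : ℝ, 0 < C ∧ ∀ R : Set (Euc n), IsRectanguloid0 R →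
      wMeas u (polarSet R) ^ (1/q) * wMeas (wFun p v) ((n : ℝ) • R) ^ (1 / rconj p)
          ≤ ENNReal.ofReal C ∧
      wMeas u ((n : ℝ) • R) ^ (1/q) * wMeas (wFun p v) (polarSet R) ^ (1 / rconj p)
          ≤ ENNReal.ofReal C) :
    ∃ C' : ℝ, 0 < C' ∧ ∀ S : Set (Euc n), IsEllipsoid0 S →
      wMeas u (polarSet S) ^ (1/q) * wMeas (wFun p v) (Real.sqrt n • S) ^ (1 / rconj p)
          ≤ ENNReal.ofReal C' ∧
      wMeas u (Real.sqrt n • S) ^ (1/q) * wMeas (wFun p v) (polarSet S) ^ (1 / rconj p)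
          ≤ ENNReal.ofReal C' := by
  obtain ⟨C, hC, hrect⟩ := hyp
  refine ⟨C, hC, fun S hS => ?_⟩
  obtain ⟨R, hR, hRS, hSR⟩ := hS.exists_isRectanguloid0_subset_subset (by omega)
  have hpolar : polarSet S ⊆ polarSet R := polarSet_antitone hRS
  have hscaled : √n • S ⊆ (n : ℝ) • R :=
    calc √n • S ⊆ √n • √n • R := Set.smul_set_mono hSR
      _ = (n : ℝ) • R := by rw [smul_smul, Real.mul_self_sqrt n.cast_nonneg]
  have hq' : 0 ≤ 1 / q := one_div_nonneg.2 (by linarith)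
  have hp' : 0 ≤ 1 / rconj p := one_div_nonneg.2 (rconj_pos hp).le
  exact ⟨le_trans (by gcongr) (hrect R hR).1, le_trans (by gcongr) (hrect R hR).2⟩

theorem stmt5 (n : ℕ) (hn : 2 ≤ n) (p q : ℝ) (hp : 1 < p) (hq : 1 < q)
    (u v : Euc n → ℝ) (hu : IsWeight u) (hv : IsWeight v)
    (hvpos : ∀ᵐ x ∂(volume : Measure (Euc n)), 0 < v x)
    (hyp : ∃ C : ℝ, 0 < C ∧ ∀ R : Set (Euc n), IsRectanguloid0 R →
      wMeas u (polarSet R) ^ (1/q) * wMeas (wFun p v) ((n : ℝ) • R) ^ (1 / rconj p)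
          ≤ ENNReal.ofReal C ∧
      wMeas u ((n : ℝ) • R) ^ (1/q) * wMeas (wFun p v) (polarSet R) ^ (1 / rconj p)
          ≤ ENNReal.ofReal C) :
    ∃ C' : ℝ, 0 < C' ∧ ∀ S : Set (Euc n), IsEllipsoid0 S →
      wMeas u (polarSet S) ^ (1/q) * wMeas (wFun p v) (Real.sqrt n • S) ^ (1 / rconj p)
          ≤ ENNReal.ofReal C' ∧
      wMeas u (Real.sqrt n • S) ^ (1/q) * wMeas (wFun p v) (polarSet S) ^ (1 / rconj p)
          ≤ ENNReal.ofReal C' :=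
  stmt5_general n hn p q hp hq u v hyp
end
end

section
/- Let μ₁ and μ₂ be nonnegative Borel measures on ℝⁿ, each positive and finite on every cube. Suppose (μ₁,μ₂) ∈ C(δ) for some δ > 0 and that at least one of μ₁, μ₂ is doubling. Then both μ₁ and μ₂ are doubling. -/
open MeasureTheory ENNReal Set Bornology Pointwise

noncomputable section

/-!
If `μ₁` is doubling, comparability applied to `E = Q ⊆ 2Q` bounds `μ₂(2Q)^δ` by a multiple of
`μ₂(Q)^δ` at once. The converse rests on the annular decay of the doubling measure `μ₂`. Cut the
annulus between radii `r = m w` and `r + w` into grid cells of side `w` and push each cell two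
steps outward along an axis in which it is extreme: comparing neighbouring cells by doubling, the
thin annulus has at most `a = 2 n C⁴` times the measure of the next annulus, of width `3w`. Hole
filling then shows that the annulus of relative width `4⁻ᴷ` carries at most `(a / (1 + a))ᴷ C`
times the measure of the inner cube. For `K` large, comparability makes `μ₁` of that annulus at
most half of `μ₁` of the outer cube, so `μ₁` at most doubles from radius `r` to `(1 + 4⁻ᴷ) r`,
and finitely many such steps reach `2 r`.
-/

namespace ENNReal

lemma le_div_one_add_mul_of_le_mul {a x z : ℝ≥0∞} (ha : a ≠ ⊤) (h : x ≤ a * z) :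
    x ≤ a / (1 + a) * (x + z) := by
  rw [← ENNReal.mul_div_right_comm, ENNReal.le_div_iff_mul_le (by simp) (by simp [ha])]
  calc x * (1 + a) = x + a * x := by ring
    _ ≤ a * z + a * x := by gcongr
    _ = a * (x + z) := by ring

lemma le_two_mul_of_le_add {a b e : ℝ≥0∞} (ha : a ≠ ⊤) (hab : a ≤ b + e)
    (he : 2 * e ≤ a) : a ≤ 2 * b := by
  refine (ENNReal.add_le_add_iff_right ha).1 ?_
  calc a + a = 2 * a := (two_mul a).symm
    _ ≤ 2 * b + 2 * e := by rw [← mul_add]; gcongr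
    _ ≤ 2 * b + a := by gcongr

end ENNReal

section

variable {n : ℕ}

lemma isCube_axisCube (c : Euc n) {r : ℝ} (hr : 0 < r) : IsCube (axisCube c r) :=
  ⟨c, r, hr, rfl⟩

lemma measurableSet_axisCube (c : Euc n) (r : ℝ) : MeasurableSet (axisCube c r) := by
  have : axisCube c r = ⋂ i, {x : Euc n | |x i - c i| ≤ r} := by ext; simp [axisCube]
  rw [this]
  exact .iInter fun i => measurableSet_le (by fun_prop) measurable_const

lemma axisCube_mono (c : Euc n) {r R : ℝ} (h : r ≤ R) : axisCube c r ⊆ axisCube c R :=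
  fun _ hx i => (hx i).trans h

def cubeAnnulus (c : Euc n) (r R : ℝ) : Set (Euc n) := axisCube c R \ axisCube c r

lemma measure_cubeAnnulus_add (μ : Measure (Euc n)) (c : Euc n) {r s t : ℝ} (hrs : r ≤ s)
    (hst : s ≤ t) :
    μ (cubeAnnulus c r s) + μ (cubeAnnulus c s t) = μ (cubeAnnulus c r t) := by
  rw [cubeAnnulus, cubeAnnulus, cubeAnnulus, ← measure_union, union_comm,
    sdiff_union_sdiff_cancel (axisCube_mono c hst) (axisCube_mono c hrs)]
  · exact disjoint_sdiff_right.mono_left sdiff_subset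
  · exact (measurableSet_axisCube c t).diff (measurableSet_axisCube c s)

def gridIndex (c : Euc n) (w : ℝ) (x : Euc n) : Fin n → ℤ := fun j => ⌊(x j - c j) / w⌋

def gridCell (c : Euc n) (w : ℝ) (g : Fin n → ℤ) : Set (Euc n) := gridIndex c w ⁻¹' {g}

lemma measurableSet_gridCell (c : Euc n) (w : ℝ) (g : Fin n → ℤ) :
    MeasurableSet (gridCell c w g) := by
  have : Measurable (gridIndex c w) := by unfold gridIndex; fun_prop
  exact this (measurableSet_singleton g)

lemma mem_gridCell_iff {c x : Euc n} {w : ℝ} (hw : 0 < w) {g : Fin n → ℤ} :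
    x ∈ gridCell c w g ↔ ∀ j, g j * w ≤ x j - c j ∧ x j - c j < (g j + 1) * w := by
  simp only [gridCell, gridIndex, mem_preimage, mem_singleton_iff, funext_iff, Int.floor_eq_iff,
    le_div_iff₀ hw, div_lt_iff₀ hw]

lemma gridCell_subset_cubeAnnulus (c : Euc n) {w : ℝ} (hw : 0 < w) {g : Fin n → ℤ} {k l : ℤ}
    (hin : ∀ j, -l ≤ g j ∧ g j < l) (i : Fin n) (hout : k < g i ∨ g i < -k) :
    gridCell c w g ⊆ cubeAnnulus c (k * w) (l * w) := by
  intro x hx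
  rw [mem_gridCell_iff hw] at hx
  refine ⟨fun j => ?_, fun hmem => ?_⟩
  · obtain ⟨h₁, h₂⟩ := hx j
    have hl : (-l : ℝ) ≤ g j := by exact_mod_cast (hin j).1
    have hu : (g j : ℝ) + 1 ≤ l := by exact_mod_cast (hin j).2
    rw [abs_le]
    constructor <;> nlinarith
  · obtain ⟨h₁, h₂⟩ := hx i
    have := abs_le.1 (hmem i)
    rcases hout with h | h
    · have : (k : ℝ) + 1 ≤ g i := by exact_mod_cast h
      nlinarith
    · have : (g i : ℝ) + 1 ≤ -k := by exact_mod_cast h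
      nlinarith

lemma gridIndex_bounds_of_mem_cubeAnnulus {c x : Euc n} {w : ℝ} (hw : 0 < w) {m : ℕ}
    (hx : x ∈ cubeAnnulus c (m * w) ((m + 1) * w)) :
    (∀ j, gridIndex c w x j ∈ Finset.Icc (-(m + 1 : ℤ)) (m + 1)) ∧
      ∃ i, (m : ℤ) ≤ gridIndex c w x i ∨ gridIndex c w x i < -m := by
  have hcell := (mem_gridCell_iff (g := gridIndex c w x) hw).1 rfl
  refine ⟨fun j => ?_, ?_⟩
  · obtain ⟨h₁, h₂⟩ := hcell j
    obtain ⟨h₃, h₄⟩ := abs_le.1 (hx.1 j)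
    have hu : (gridIndex c w x j : ℝ) ≤ m + 1 := le_of_mul_le_mul_right (h₁.trans h₄) hw
    have hl : -(m + 1 : ℝ) < gridIndex c w x j + 1 := lt_of_mul_lt_mul_right (by linarith) hw.le
    rw [Finset.mem_Icc]
    constructor
    · have : (-(m + 1 : ℤ) : ℝ) < gridIndex c w x j + 1 := by push_cast; exact hl
      exact Int.lt_add_one_iff.1 (by exact_mod_cast this)
    · exact_mod_cast hu
  · obtain ⟨i, hi⟩ : ∃ i, ¬ |x i - c i| ≤ m * w := by
      by_contra! h
      exact hx.2 h
    obtain ⟨h₁, h₂⟩ := hcell i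
    refine ⟨i, ?_⟩
    rcases le_or_gt 0 (x i - c i) with hs | hs
    · rw [abs_of_nonneg hs, not_le] at hi
      have : (m : ℝ) < gridIndex c w x i + 1 := lt_of_mul_lt_mul_right (by linarith) hw.le
      exact Or.inl (Int.lt_add_one_iff.1 (by exact_mod_cast this))
    · rw [abs_of_neg hs, not_le] at hi
      have : (gridIndex c w x i : ℝ) < -m := lt_of_mul_lt_mul_right (by linarith) hw.le
      exact Or.inr (by exact_mod_cast this)

variable {μ : Measure (Euc n)}

lemma measure_axisCube_pow_mul_le {s : ℝ} (hs : 0 < s) {K : ℝ≥0∞}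
    (h : ∀ (c : Euc n) (r : ℝ), 0 < r → μ (axisCube c (s * r)) ≤ K * μ (axisCube c r))
    (j : ℕ) (c : Euc n) {r : ℝ} (hr : 0 < r) :
    μ (axisCube c (s ^ j * r)) ≤ K ^ j * μ (axisCube c r) := by
  induction j with
  | zero => simp
  | succ j ih =>
    calc μ (axisCube c (s ^ (j + 1) * r)) = μ (axisCube c (s * (s ^ j * r))) := by ring_nf
      _ ≤ K * μ (axisCube c (s ^ j * r)) := h c _ (by positivity)
      _ ≤ K * (K ^ j * μ (axisCube c r)) := by gcongr
      _ = K ^ (j + 1) * μ (axisCube c r) := by ring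

lemma doubling_of_measure_axisCube_mul_le {s : ℝ} (hs : 1 < s) {K : ℝ} (hK : 0 < K)
    (h : ∀ (c : Euc n) (r : ℝ), 0 < r →
      μ (axisCube c (s * r)) ≤ ENNReal.ofReal K * μ (axisCube c r)) :
    Doubling μ := by
  obtain ⟨j, hj⟩ := pow_unbounded_of_one_lt 2 hs
  refine ⟨K ^ j, by positivity, fun c r hr => ?_⟩
  calc μ (axisCube c (2 * r)) ≤ μ (axisCube c (s ^ j * r)) :=
        measure_mono (axisCube_mono c (by gcongr))
    _ ≤ ENNReal.ofReal K ^ j * μ (axisCube c r) :=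
        measure_axisCube_pow_mul_le (by linarith) h j c hr
    _ = ENNReal.ofReal (K ^ j) * μ (axisCube c r) := by rw [ENNReal.ofReal_pow hK.le]

def DoublingWith (μ : Measure (Euc n)) (C : ℝ≥0∞) : Prop :=
  ∀ (c : Euc n) (r : ℝ), 0 < r → μ (axisCube c (2 * r)) ≤ C * μ (axisCube c r)

namespace DoublingWith

variable {C : ℝ≥0∞}

lemma measure_gridCell_le (hd : DoublingWith μ C) (c : Euc n) {w : ℝ} (hw : 0 < w)
    {g g' : Fin n → ℤ} (h : ∀ j, |g j - g' j| ≤ 2) :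
    μ (gridCell c w g) ≤ C ^ 4 * μ (gridCell c w g') := by
  set z : Euc n := WithLp.toLp 2 fun j => c j + (g' j + 1 / 2) * w
  have hz : ∀ j, z j = c j + (g' j + 1 / 2) * w := fun _ => rfl
  have hbig : gridCell c w g ⊆ axisCube z (2 ^ 4 * (w / 4)) := by
    intro x hx j
    obtain ⟨h₁, h₂⟩ := (mem_gridCell_iff hw).1 hx j
    have hgj : |((g j - g' j : ℤ) : ℝ)| ≤ 2 := by exact_mod_cast h j
    rw [abs_le] at hgj ⊢
    push_cast at hgj
    rw [hz]
    constructor <;> nlinarith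
  have hsmall : axisCube z (w / 4) ⊆ gridCell c w g' := by
    intro x hx
    rw [mem_gridCell_iff hw]
    intro j
    have := abs_le.1 (hx j)
    rw [hz] at this
    constructor <;> linarith
  calc μ (gridCell c w g) ≤ μ (axisCube z (2 ^ 4 * (w / 4))) := measure_mono hbig
    _ ≤ C ^ 4 * μ (axisCube z (w / 4)) := measure_axisCube_pow_mul_le two_pos hd 4 z (by positivity)
    _ ≤ C ^ 4 * μ (gridCell c w g') := by gcongr

lemma measure_biUnion_gridCell_le (hd : DoublingWith μ C) (c : Euc n) {w : ℝ} (hw : 0 < w)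
    (G : Finset (Fin n → ℤ)) {v : Fin n → ℤ} (hv : ∀ j, |v j| ≤ 2) {S : Set (Euc n)}
    (hS : ∀ g ∈ G, gridCell c w (g + v) ⊆ S) :
    μ (⋃ g ∈ G, gridCell c w g) ≤ C ^ 4 * μ S := by
  have hdisj : (G : Set (Fin n → ℤ)).PairwiseDisjoint fun g => gridCell c w (g + v) :=
    fun g _ g' _ hne => Disjoint.preimage _ (disjoint_singleton.2 fun h => hne (add_right_cancel h))
  calc μ (⋃ g ∈ G, gridCell c w g) ≤ ∑ g ∈ G, μ (gridCell c w g) := measure_biUnion_finset_le G _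
    _ ≤ ∑ g ∈ G, C ^ 4 * μ (gridCell c w (g + v)) :=
      Finset.sum_le_sum fun g _ => hd.measure_gridCell_le c hw fun j => by simpa using hv j
    _ = C ^ 4 * μ (⋃ g ∈ G, gridCell c w (g + v)) := by
      rw [← Finset.mul_sum, measure_biUnion_finset hdisj fun g _ => measurableSet_gridCell c w _]
    _ ≤ C ^ 4 * μ S := by gcongr; exact iUnion₂_subset hS

lemma measure_biUnion_gridCell_le_cubeAnnulus (hd : DoublingWith μ C) (c : Euc n) {w : ℝ}
    (hw : 0 < w) {m : ℕ} (i : Fin n) {s : ℤ} (hs : |s| ≤ 2) (P : Finset (Fin n → ℤ))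
    (hP : ∀ g ∈ P, (∀ j, -(m + 1 : ℤ) ≤ g j ∧ g j ≤ m + 1) ∧
      ((m + 1 : ℤ) < g i + s ∨ g i + s < -(m + 1 : ℤ))) :
    μ (⋃ g ∈ P, gridCell c w g) ≤ C ^ 4 * μ (cubeAnnulus c ((m + 1) * w) ((m + 4) * w)) := by
  refine hd.measure_biUnion_gridCell_le c hw P (v := Pi.single i s)
    (fun j => by rcases eq_or_ne j i with rfl | hj <;> simp [*]) fun g hg => ?_
  obtain ⟨hbox, hout⟩ := hP g hg
  have hin : ∀ j, -(m + 4 : ℤ) ≤ (g + Pi.single i s : Fin n → ℤ) j ∧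
      (g + Pi.single i s : Fin n → ℤ) j < m + 4 := by
    intro j
    have := hbox j
    have := abs_le.1 hs
    rcases eq_or_ne j i with rfl | hj <;> simp [*] <;> omega
  have := gridCell_subset_cubeAnnulus c hw (k := m + 1) hin i (by simpa using hout)
  push_cast at this
  exact this

lemma measure_cubeAnnulus_le_mul (hd : DoublingWith μ C) (c : Euc n) {w : ℝ} (hw : 0 < w)
    (m : ℕ) :
    μ (cubeAnnulus c (m * w) ((m + 1) * w)) ≤
      n * 2 * C ^ 4 * μ (cubeAnnulus c ((m + 1) * w) ((m + 4) * w)) := by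
  classical
  set B : Finset (Fin n → ℤ) := Fintype.piFinset fun _ => Finset.Icc (-(m + 1 : ℤ)) (m + 1)
  set S := cubeAnnulus c ((m + 1) * w) ((m + 4) * w)
  have hB : ∀ g ∈ B, ∀ j, -(m + 1 : ℤ) ≤ g j ∧ g j ≤ m + 1 := fun g hg j =>
    Finset.mem_Icc.1 (Fintype.mem_piFinset.1 hg j)
  have hcover : cubeAnnulus c (m * w) ((m + 1) * w) ⊆
      ⋃ i, ((⋃ g ∈ B.filter (fun g => (m : ℤ) ≤ g i), gridCell c w g) ∪
        ⋃ g ∈ B.filter (fun g => g i < -(m : ℤ)), gridCell c w g) := by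
    intro x hx
    obtain ⟨hxB, i, hi⟩ := gridIndex_bounds_of_mem_cubeAnnulus hw hx
    have hxB : gridIndex c w x ∈ B := Fintype.mem_piFinset.2 hxB
    refine mem_iUnion.2 ⟨i, ?_⟩
    rcases hi with hi | hi
    · exact Or.inl (mem_biUnion (Finset.mem_filter.2 ⟨hxB, hi⟩) rfl)
    · exact Or.inr (mem_biUnion (Finset.mem_filter.2 ⟨hxB, hi⟩) rfl)
  have hside : ∀ i, μ ((⋃ g ∈ B.filter (fun g => (m : ℤ) ≤ g i), gridCell c w g) ∪
      ⋃ g ∈ B.filter (fun g => g i < -(m : ℤ)), gridCell c w g) ≤ C ^ 4 * μ S + C ^ 4 * μ S := by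
    intro i
    refine (measure_union_le _ _).trans (add_le_add ?_ ?_)
    · refine hd.measure_biUnion_gridCell_le_cubeAnnulus c hw i (s := 2) (by norm_num) _
        fun g hg => ?_
      obtain ⟨hg, hgi⟩ := Finset.mem_filter.1 hg
      exact ⟨hB g hg, Or.inl (by omega)⟩
    · refine hd.measure_biUnion_gridCell_le_cubeAnnulus c hw i (s := -2) (by norm_num) _
        fun g hg => ?_
      obtain ⟨hg, hgi⟩ := Finset.mem_filter.1 hg
      exact ⟨hB g hg, Or.inr (by omega)⟩
  calc μ (cubeAnnulus c (m * w) ((m + 1) * w))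
      ≤ ∑ i, μ ((⋃ g ∈ B.filter (fun g => (m : ℤ) ≤ g i), gridCell c w g) ∪
          ⋃ g ∈ B.filter (fun g => g i < -(m : ℤ)), gridCell c w g) :=
        (measure_mono hcover).trans (measure_iUnion_fintype_le _ _)
    _ ≤ ∑ _i : Fin n, (C ^ 4 * μ S + C ^ 4 * μ S) := Finset.sum_le_sum fun i _ => hside i
    _ = n * 2 * C ^ 4 * μ S := by
        simp only [Finset.sum_const, Finset.card_univ, Fintype.card_fin, nsmul_eq_mul]
        ring

lemma measure_cubeAnnulus_le_pow (hd : DoublingWith μ C) (hC : C ≠ ⊤) (c : Euc n) {r : ℝ}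
    (hr : 0 < r) (K : ℕ) :
    μ (cubeAnnulus c r (r + r / 4 ^ K)) ≤
      (n * 2 * C ^ 4 / (1 + n * 2 * C ^ 4)) ^ K * C * μ (axisCube c r) := by
  induction K with
  | zero =>
    calc μ (cubeAnnulus c r (r + r / 4 ^ 0)) ≤ μ (axisCube c (2 * r)) :=
          measure_mono (by rw [pow_zero, div_one, ← two_mul]; exact sdiff_subset)
      _ ≤ C * μ (axisCube c r) := hd c r hr
      _ = _ := by simp
  | succ K ih =>
    set w := r / 4 ^ (K + 1)
    have hw : 0 < w := by positivity
    have hstep := hd.measure_cubeAnnulus_le_mul c hw (4 ^ (K + 1))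
    have h₀ : ((4 ^ (K + 1) : ℕ) : ℝ) * w = r := by simp [w]; field_simp
    have h₁ : (((4 ^ (K + 1) : ℕ) : ℝ) + 1) * w = r + w := by rw [add_mul, h₀, one_mul]
    have h₄ : (((4 ^ (K + 1) : ℕ) : ℝ) + 4) * w = r + r / 4 ^ K := by
      rw [add_mul, h₀]; simp only [w]; field_simp; ring
    rw [h₀, h₁, h₄] at hstep
    have ha : (n * 2 * C ^ 4 : ℝ≥0∞) ≠ ⊤ := by simp [ENNReal.mul_eq_top, hC]
    rw [← measure_cubeAnnulus_add μ c (s := r + w) (by linarith) (by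
      simp only [w]; gcongr; norm_num; omega)] at ih
    calc μ (cubeAnnulus c r (r + w))
        ≤ _ := ENNReal.le_div_one_add_mul_of_le_mul ha hstep
      _ ≤ _ * ((n * 2 * C ^ 4 / (1 + n * 2 * C ^ 4)) ^ K * C * μ (axisCube c r)) := by gcongr
      _ = _ := by ring

open Filter Topology in
lemma exists_measure_cubeAnnulus_le (hd : DoublingWith μ C) (hC : C ≠ ⊤)
    {ε : ℝ≥0∞} (hε : 0 < ε) :
    ∃ t : ℝ, 0 < t ∧ ∀ (c : Euc n) (r : ℝ), 0 < r →
      μ (cubeAnnulus c r ((1 + t) * r)) ≤ ε * μ (axisCube c r) := by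
  set a : ℝ≥0∞ := n * 2 * C ^ 4
  have ha : a ≠ ⊤ := by simp [a, ENNReal.mul_eq_top, hC]
  have hρ : a / (1 + a) < 1 := by
    rw [ENNReal.div_lt_iff (by simp) (by simp [ha]), one_mul, add_comm]
    exact ENNReal.lt_add_right ha one_ne_zero
  have hlim : Tendsto (fun K : ℕ => (a / (1 + a)) ^ K * C) atTop (𝓝 0) := by
    simpa using
      ENNReal.Tendsto.mul_const (ENNReal.tendsto_pow_atTop_nhds_zero_of_lt_one hρ) (Or.inr hC)
  obtain ⟨K, hK⟩ := (hlim.eventually (gt_mem_nhds hε)).exists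
  refine ⟨(4 ^ K)⁻¹, by positivity, fun c r hr => ?_⟩
  calc μ (cubeAnnulus c r ((1 + (4 ^ K)⁻¹) * r)) = μ (cubeAnnulus c r (r + r / 4 ^ K)) := by
        ring_nf
    _ ≤ (a / (1 + a)) ^ K * C * μ (axisCube c r) := hd.measure_cubeAnnulus_le_pow hC c hr K
    _ ≤ ε * μ (axisCube c r) := by gcongr

end DoublingWith

namespace Compar

variable {μ₁ μ₂ : Measure (Euc n)} {δ : ℝ}

lemma doubling_right (h : Compar μ₁ μ₂ δ) (hδ : 0 < δ)
    (hμ₁ : ∀ Q : Set (Euc n), IsCube Q → 0 < μ₁ Q ∧ μ₁ Q < ⊤) (h₁ : Doubling μ₁) :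
    Doubling μ₂ := by
  obtain ⟨A, hA, hcmp⟩ := h
  obtain ⟨C, hC, hd⟩ := h₁
  refine ⟨(A * C) ^ δ⁻¹, by positivity, fun c r hr => ?_⟩
  obtain ⟨h0, htop⟩ := hμ₁ _ (isCube_axisCube c hr)
  have key : μ₂ (axisCube c (2 * r)) ^ δ ≤ ENNReal.ofReal (A * C) * μ₂ (axisCube c r) ^ δ := by
    rw [← ENNReal.mul_le_mul_iff_right h0.ne' htop.ne]
    calc μ₁ (axisCube c r) * μ₂ (axisCube c (2 * r)) ^ δ
        ≤ ENNReal.ofReal A * (μ₁ (axisCube c (2 * r)) * μ₂ (axisCube c r) ^ δ) :=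
          hcmp _ (isCube_axisCube c (by positivity)) _ (axisCube_mono c (by linarith))
            (measurableSet_axisCube c r)
      _ ≤ ENNReal.ofReal A * (ENNReal.ofReal C * μ₁ (axisCube c r) * μ₂ (axisCube c r) ^ δ) := by
          gcongr; exact hd c r hr
      _ = μ₁ (axisCube c r) * (ENNReal.ofReal (A * C) * μ₂ (axisCube c r) ^ δ) := by
          rw [ENNReal.ofReal_mul hA.le]; ring
  rwa [← ENNReal.rpow_le_rpow_iff hδ, ENNReal.mul_rpow_of_nonneg _ _ hδ.le,
    ENNReal.ofReal_rpow_of_nonneg (by positivity) hδ.le, ← Real.rpow_mul (by positivity),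
    inv_mul_cancel₀ hδ.ne', Real.rpow_one]

lemma exists_two_mul_le (h : Compar μ₁ μ₂ δ) (hδ : 0 < δ)
    (hμ₂ : ∀ Q : Set (Euc n), IsCube Q → 0 < μ₂ Q ∧ μ₂ Q < ⊤) :
    ∃ ε : ℝ≥0∞, 0 < ε ∧ ∀ Q : Set (Euc n), IsCube Q → ∀ E ⊆ Q, MeasurableSet E →
      μ₂ E ≤ ε * μ₂ Q → 2 * μ₁ E ≤ μ₁ Q := by
  obtain ⟨A, hA, hcmp⟩ := h
  refine ⟨ENNReal.ofReal ((2 * A)⁻¹ ^ δ⁻¹), by simp; positivity, fun Q hQ E hEQ hE hsmall => ?_⟩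
  have hpow : ENNReal.ofReal ((2 * A)⁻¹ ^ δ⁻¹) ^ δ = ENNReal.ofReal (2 * A)⁻¹ := by
    rw [ENNReal.ofReal_rpow_of_nonneg (by positivity) hδ.le, ← Real.rpow_mul (by positivity),
      inv_mul_cancel₀ hδ.ne', Real.rpow_one]
  have hone : 2 * ENNReal.ofReal A * ENNReal.ofReal (2 * A)⁻¹ = 1 := by
    rw [← ENNReal.ofReal_ofNat, ← ENNReal.ofReal_mul (by norm_num),
      ← ENNReal.ofReal_mul (by positivity), mul_inv_cancel₀ (by positivity), ENNReal.ofReal_one]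
  obtain ⟨h0, htop⟩ := hμ₂ Q hQ
  rw [← ENNReal.mul_le_mul_iff_left (ENNReal.rpow_pos h0 htop.ne).ne'
    (ENNReal.rpow_ne_top_of_nonneg hδ.le htop.ne)]
  calc 2 * μ₁ E * μ₂ Q ^ δ ≤ 2 * (ENNReal.ofReal A * (μ₁ Q * μ₂ E ^ δ)) := by
        rw [mul_assoc]; gcongr 2 * ?_; exact hcmp Q hQ E hEQ hE
    _ ≤ 2 * (ENNReal.ofReal A * (μ₁ Q * (ENNReal.ofReal (2 * A)⁻¹ * μ₂ Q ^ δ))) := by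
        rw [← hpow, ← ENNReal.mul_rpow_of_nonneg _ _ hδ.le]; gcongr
    _ = μ₁ Q * μ₂ Q ^ δ := by
        rw [← one_mul (μ₁ Q * μ₂ Q ^ δ), ← hone]; ring

lemma doubling_left (h : Compar μ₁ μ₂ δ) (hδ : 0 < δ)
    (hμ₁ : ∀ Q : Set (Euc n), IsCube Q → μ₁ Q < ⊤)
    (hμ₂ : ∀ Q : Set (Euc n), IsCube Q → 0 < μ₂ Q ∧ μ₂ Q < ⊤) (h₂ : Doubling μ₂) :
    Doubling μ₁ := by
  obtain ⟨ε, hε, hhalf⟩ := h.exists_two_mul_le hδ hμ₂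
  obtain ⟨C, -, hd⟩ := h₂
  obtain ⟨t, ht, hann⟩ :=
    DoublingWith.exists_measure_cubeAnnulus_le (C := ENNReal.ofReal C) hd ENNReal.ofReal_ne_top hε
  refine doubling_of_measure_axisCube_mul_le (s := 1 + t) (by linarith) two_pos fun c r hr => ?_
  have hQ : IsCube (axisCube c ((1 + t) * r)) := isCube_axisCube c (by positivity)
  have hsub : axisCube c r ⊆ axisCube c ((1 + t) * r) := axisCube_mono c (by nlinarith)
  have hE := hhalf _ hQ _ sdiff_subset
    ((measurableSet_axisCube c _).diff (measurableSet_axisCube c r))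
    ((hann c r hr).trans (by gcongr))
  rw [ENNReal.ofReal_ofNat]
  exact ENNReal.le_two_mul_of_le_add (hμ₁ _ hQ).ne
    ((measure_mono (union_sdiff_cancel hsub).ge).trans (measure_union_le _ _)) hE

end Compar

end

theorem stmt7_general (n : ℕ) (μ₁ μ₂ : Measure (Euc n))
    (hμ₁ : ∀ Q : Set (Euc n), IsCube Q → 0 < μ₁ Q ∧ μ₁ Q < ⊤)
    (hμ₂ : ∀ Q : Set (Euc n), IsCube Q → 0 < μ₂ Q ∧ μ₂ Q < ⊤)
    (δ : ℝ) (hδ : 0 < δ) (hcomp : Compar μ₁ μ₂ δ)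
    (hdoub : Doubling μ₁ ∨ Doubling μ₂) :
    Doubling μ₁ ∧ Doubling μ₂ :=
  hdoub.elim (fun h₁ => ⟨h₁, hcomp.doubling_right hδ hμ₁ h₁⟩)
    fun h₂ => ⟨hcomp.doubling_left hδ (fun Q hQ => (hμ₁ Q hQ).2) hμ₂ h₂, h₂⟩

theorem stmt7 (n : ℕ) (hn : 1 ≤ n) (μ₁ μ₂ : Measure (Euc n))
    (hμ₁ : ∀ Q : Set (Euc n), IsCube Q → 0 < μ₁ Q ∧ μ₁ Q < ⊤)
    (hμ₂ : ∀ Q : Set (Euc n), IsCube Q → 0 < μ₂ Q ∧ μ₂ Q < ⊤)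
    (δ : ℝ) (hδ : 0 < δ) (hcomp : Compar μ₁ μ₂ δ)
    (hdoub : Doubling μ₁ ∨ Doubling μ₂) :
    Doubling μ₁ ∧ Doubling μ₂ :=
  stmt7_general n μ₁ μ₂ hμ₁ hμ₂ δ hδ hcomp hdoub
end
end

section
/- Let 1 < p, q < ∞ with s = max{p', q} ≥ 2, set s' = s/(s−1), and let u, v be weights. Suppose there is a constant C such that u(E)^{1/q} ≤ C · |E|^{1/s} · |F|^{−1/s'} · v(F)^{1/p} for all bounded measurable sets E, F ⊆ ℝⁿ with |F| > 0. Then there is a constant C' such that for every bounded measurable set A ⊆ ℝⁿ and every α > 0: u({z ∈ ℝⁿ : |χ̂_A(z)| > α})^{1/q} ≤ (C'/α) · v(A)^{1/p}, where χ_A denotes the indicator function of A; that is, the Fourier transform is restricted weak-type (p,q) with respect to the measures u and v on bounded sets. -/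
open MeasureTheory ENNReal Set Bornology Pointwise

noncomputable section

section AuxLemmas
open scoped RealInnerProductSpace
variable {n : ℕ} {A : Set (Euc n)}


lemma norm_exp_inner (x z : Euc n) : ‖Complex.exp (-(Complex.I * ((inner ℝ x z : ℝ) : ℂ)))‖ = 1 := by
  simp [Complex.norm_exp]

lemma chi_norm (x : Euc n) : ‖A.indicator (fun _ => (1:ℂ)) x‖ = A.indicator (fun _ => (1:ℝ)) x := by
  classical
  by_cases hx : x ∈ A <;> simp [hx]

lemma conj_chi (x : Euc n) :
    (starRingEnd ℂ) (A.indicator (fun _ => (1:ℂ)) x) = A.indicator (fun _ => (1:ℂ)) x := by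
  classical
  by_cases hx : x ∈ A <;> simp [hx]

lemma chi_eq_ofReal (x : Euc n) :
    A.indicator (fun _ => (1:ℂ)) x = ((A.indicator (fun _ => (1:ℝ)) x : ℝ) : ℂ) := by
  classical
  by_cases hx : x ∈ A <;> simp [hx]

lemma chi_integrable (hA : IsBounded A) (hAm : MeasurableSet A) :
    Integrable (A.indicator (fun _ => (1:ℂ))) := by
  rw [integrable_indicator_iff hAm]
  exact integrableOn_const hA.measure_lt_top.ne

lemma chiR_integrable (hA : IsBounded A) (hAm : MeasurableSet A) :
    Integrable (A.indicator (fun _ => (1:ℝ))) := by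
  rw [integrable_indicator_iff hAm]
  exact integrableOn_const hA.measure_lt_top.ne

lemma integrand_integrable (hA : IsBounded A) (hAm : MeasurableSet A) (z : Euc n) :
    Integrable (fun x : Euc n => A.indicator (fun _ => (1:ℂ)) x *
      Complex.exp (-(Complex.I * ((inner ℝ x z : ℝ) : ℂ)))) := by
  have hc : Continuous (fun x : Euc n => Complex.exp (-(Complex.I * ((inner ℝ x z : ℝ) : ℂ)))) :=
    Complex.continuous_exp.comp
      (continuous_const.mul (Complex.continuous_ofReal.comp (continuous_id.inner continuous_const))).neg
  have h := (chi_integrable hA hAm).bdd_mul hc.aestronglyMeasurable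
    (ae_of_all _ fun x => le_of_eq (norm_exp_inner x z))
  simpa [mul_comm] using h

lemma ftrans_norm_le (hA : IsBounded A) (hAm : MeasurableSet A) (z : Euc n) :
    ‖ftrans (A.indicator fun _ => (1:ℂ)) z‖ ≤ (volume A).toReal := by
  refine (norm_integral_le_integral_norm _).trans ?_
  have : ∀ x : Euc n, ‖A.indicator (fun _ => (1:ℂ)) x *
      Complex.exp (-(Complex.I * ((inner ℝ x z : ℝ) : ℂ)))‖ = A.indicator (fun _ => (1:ℝ)) x := by
    intro x; rw [norm_mul, norm_exp_inner, chi_norm, mul_one]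
  rw [show (fun x : Euc n => ‖A.indicator (fun _ => (1:ℂ)) x *
      Complex.exp (-(Complex.I * ((inner ℝ x z : ℝ) : ℂ)))‖) = A.indicator (fun _ => (1:ℝ)) from funext this]
  rw [integral_indicator_const _ hAm]
  simp
  exact le_rfl

lemma ftrans_continuous (hA : IsBounded A) (hAm : MeasurableSet A) :
    Continuous (ftrans (A.indicator fun _ => (1:ℂ))) := by
  apply continuous_of_dominated (bound := A.indicator (fun _ => (1:ℝ)))
  · exact fun z => (integrand_integrable hA hAm z).aestronglyMeasurable
  · intro z
    filter_upwards with x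
    rw [norm_mul, norm_exp_inner, chi_norm, mul_one]
  · exact chiR_integrable hA hAm
  · filter_upwards with x
    exact continuous_const.mul (Complex.continuous_exp.comp
      (continuous_const.mul (Complex.continuous_ofReal.comp (continuous_const.inner continuous_id))).neg)

lemma gauss_integrable {b : ℝ} (hb : 0 < b) :
    Integrable (fun v : Euc n => Real.exp (-(b * ‖v‖^2))) := by
  have h := (GaussianFourier.integrable_cexp_neg_mul_sq_norm_add
    (V := Euc n) (b := (b:ℂ)) (by simpa using hb) 0 (0 : Euc n)).norm
  convert h using 2 with v
  rw [Complex.norm_exp]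
  norm_num
  left; norm_cast

lemma gauss_integral {b : ℝ} (hb : 0 < b) :
    ∫ v : Euc n, Real.exp (-(b * ‖v‖^2)) = (Real.pi / b) ^ ((n:ℝ) / 2) := by
  have h := GaussianFourier.integral_rexp_neg_mul_sq_norm (V := Euc n) hb
  simpa [neg_mul] using h

lemma gauss_fourier {ε : ℝ} (hε : 0 < ε) (x y : Euc n) :
    ∫ z : Euc n, Complex.exp (-(ε:ℂ) * (‖z‖:ℂ)^2 + (-Complex.I) * ((inner ℝ (x - y) z : ℝ) : ℂ))
      = (((Real.pi/ε) ^ ((n:ℝ)/2) : ℝ) : ℂ)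
        * Complex.exp ((-(‖x - y‖^2 / (4*ε)) : ℝ) : ℂ) := by
  rw [GaussianFourier.integral_cexp_neg_mul_sq_norm_add (V := Euc n)
    (b := (ε:ℂ)) (by simpa using hε) (-Complex.I) (x - y)]
  congr 1
  · have h2 : ((Module.finrank ℝ (Euc n) : ℂ))/2 = (((n:ℝ)/2 : ℝ) : ℂ) := by
      rw [finrank_euclideanSpace_fin]; push_cast; ring
    rw [show ((Real.pi : ℂ)/(ε:ℂ)) = ((Real.pi/ε : ℝ) : ℂ) by push_cast; ring, h2,
      ← Complex.ofReal_cpow (by positivity) ((n:ℝ)/2)]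
  · congr 1
    rw [show ((-Complex.I)^2 : ℂ) = -1 by simp [Complex.I_sq]]
    push_cast
    ring

set_option maxHeartbeats 1000000 in
lemma keyL2 (hA : IsBounded A) (hAm : MeasurableSet A) {ε : ℝ} (hε : 0 < ε) :
    ∫⁻ z : Euc n, ENNReal.ofReal
        (‖ftrans (A.indicator fun _ => (1:ℂ)) z‖^2 * Real.exp (-(ε * ‖z‖^2)))
      ≤ ENNReal.ofReal ((2*Real.pi)^n) * volume A := by
  classical
  set χ : Euc n → ℂ := A.indicator (fun _ => (1:ℂ)) with hχdef
  set indR : Euc n → ℝ := A.indicator (fun _ => (1:ℝ)) with hindRdef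
  set F := ftrans χ with hFdef
  set M := (volume A).toReal with hMdef
  have hFc : Continuous F := ftrans_continuous hA hAm
  have hFle : ∀ z, ‖F z‖ ≤ M := ftrans_norm_le hA hAm
  have hχm : Measurable χ := measurable_const.indicator hAm
  have hindRm : Measurable indR := measurable_const.indicator hAm
  have hindR01 : ∀ x, 0 ≤ indR x ∧ indR x ≤ 1 := by
    intro x; by_cases hx : x ∈ A <;> simp [hindRdef, hx]
  set φ : Euc n → ℝ := fun z => ‖F z‖^2 * Real.exp (-(ε * ‖z‖^2)) with hφdef
  have hgc : Continuous (fun z : Euc n => Real.exp (-(ε * ‖z‖^2))) :=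
    Real.continuous_exp.comp (continuous_const.mul (continuous_norm.pow 2)).neg
  have hφnn : ∀ z, 0 ≤ φ z := fun z => mul_nonneg (sq_nonneg _) (Real.exp_pos _).le
  have hφint : Integrable φ := by
    refine Integrable.mono' ((gauss_integrable hε).const_mul (M^2)) ?_ ?_
    · exact ((hFc.norm.pow 2).mul hgc).aestronglyMeasurable
    · filter_upwards with z
      rw [Real.norm_of_nonneg (hφnn z)]
      have h1 : ‖F z‖^2 ≤ M^2 := by nlinarith [norm_nonneg (F z), hFle z]
      exact mul_le_mul_of_nonneg_right h1 (Real.exp_pos _).le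
  -- the complex integrand
  set Fc : Euc n → ℂ := fun z => F z * (starRingEnd ℂ) (F z) * Complex.exp (-(ε:ℂ) * (‖z‖:ℂ)^2)
    with hFcdef
  have hexp_eq : ∀ z : Euc n, (-(ε:ℂ) * (‖z‖:ℂ)^2) = ((-(ε * ‖z‖^2) : ℝ) : ℂ) := by
    intro z; push_cast; ring
  have hpt : ∀ z, φ z = (Fc z).re := by
    intro z
    rw [hFcdef]
    simp only
    rw [Complex.mul_conj, hexp_eq, ← Complex.ofReal_exp, ← Complex.ofReal_mul, Complex.ofReal_re]
    simp [hφdef, Complex.normSq_eq_norm_sq]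
  have hFcint : Integrable Fc := by
    refine Integrable.mono' ((gauss_integrable hε).const_mul (M^2)) ?_ ?_
    · have h1 : Continuous fun z : Euc n => (starRingEnd ℂ) (F z) := continuous_star.comp hFc
      have h2 : Continuous fun z : Euc n => Complex.exp (-(ε:ℂ) * (‖z‖:ℂ)^2) := by
        have h3 : Continuous fun z : Euc n => -(ε:ℂ) * (‖z‖:ℂ)^2 := by
          have := (continuous_const (y := -(ε:ℂ))).mul
            ((Complex.continuous_ofReal.comp (continuous_norm (E := Euc n))).pow 2)
          exact this
        exact Complex.continuous_exp.comp h3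
      exact ((hFc.mul h1).mul h2).aestronglyMeasurable
    · filter_upwards with z
      have hnorm : ‖Fc z‖ = ‖F z‖^2 * Real.exp (-(ε * ‖z‖^2)) := by
        rw [hFcdef]
        simp only
        rw [hexp_eq z, ← Complex.ofReal_exp, norm_mul, norm_mul, RCLike.norm_conj,
          Complex.norm_real, Real.norm_of_nonneg (Real.exp_pos _).le]
        ring
      rw [hnorm]
      have h1 : ‖F z‖^2 ≤ M^2 := by nlinarith [norm_nonneg (F z), hFle z]
      exact mul_le_mul_of_nonneg_right h1 (Real.exp_pos _).le
  -- Fubini setup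
  set G : Euc n → (Euc n × Euc n) → ℂ := fun z w => χ w.1 * χ w.2 *
      Complex.exp (-(ε:ℂ) * (‖z‖:ℂ)^2 + (-Complex.I) * ((inner ℝ (w.1 - w.2) z : ℝ) : ℂ)) with hGdef
  have hprod : ∀ z, Fc z = ∫ w : Euc n × Euc n, G z w := by
    intro z
    have hconj : (starRingEnd ℂ) (F z)
        = ∫ y : Euc n, χ y * Complex.exp (Complex.I * ((inner ℝ y z : ℝ) : ℂ)) := by
      rw [hFdef, ftrans, ← integral_conj]
      congr 1 with y
      rw [map_mul, conj_chi]
      congr 1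
      rw [← Complex.exp_conj]
      congr 1
      simp [Complex.conj_I]
    rw [hFcdef]
    simp only
    rw [hconj, hFdef, ftrans, ← integral_prod_mul, ← integral_mul_const, hGdef]
    congr 1 with w
    rw [mul_mul_mul_comm, mul_assoc, ← Complex.exp_add, ← Complex.exp_add]
    congr 2
    rw [show (inner ℝ (w.1 - w.2) z : ℝ) = (inner ℝ w.1 z : ℝ) - (inner ℝ w.2 z : ℝ) from
      inner_sub_left _ _ _]
    push_cast
    ring
  have hGm : AEStronglyMeasurable (Function.uncurry G)
      ((volume : Measure (Euc n)).prod (volume.prod volume)) := by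
    have m1 : Measurable fun p : Euc n × Euc n × Euc n => χ p.2.1 :=
      hχm.comp (measurable_fst.comp measurable_snd)
    have m2 : Measurable fun p : Euc n × Euc n × Euc n => χ p.2.2 :=
      hχm.comp (measurable_snd.comp measurable_snd)
    have c3 : Continuous fun p : Euc n × Euc n × Euc n =>
        Complex.exp (-(ε:ℂ) * (‖p.1‖:ℂ)^2 + (-Complex.I) * ((inner ℝ (p.2.1 - p.2.2) p.1 : ℝ) : ℂ)) := by
      apply Complex.continuous_exp.comp
      apply Continuous.add
      · have := (continuous_const (y := -(ε:ℂ))).mul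
          ((Complex.continuous_ofReal.comp ((continuous_norm (E := Euc n)).comp (continuous_fst : Continuous fun p : Euc n × Euc n × Euc n => p.1))).pow 2)
        exact this
      · exact continuous_const.mul (Complex.continuous_ofReal.comp
          (((continuous_fst.comp continuous_snd).sub (continuous_snd.comp continuous_snd)).inner
            continuous_fst))
    exact ((m1.mul m2).mul c3.measurable).aestronglyMeasurable
  have hGnorm : ∀ (z : Euc n) (w : Euc n × Euc n),
      ‖G z w‖ = Real.exp (-(ε * ‖z‖^2)) * (indR w.1 * indR w.2) := by
    intro z w
    rw [hGdef]
    simp only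
    have hre : (-(ε:ℂ) * (‖z‖:ℂ)^2 + (-Complex.I) * ((inner ℝ (w.1 - w.2) z : ℝ) : ℂ)).re
        = -(ε * ‖z‖^2) := by rw [hexp_eq z]; simp; left; norm_cast
    rw [norm_mul, norm_mul, chi_norm, chi_norm, Complex.norm_exp, hre]
    ring
  have hGint : Integrable (Function.uncurry G)
      ((volume : Measure (Euc n)).prod (volume.prod volume)) := by
    refine Integrable.mono' ((gauss_integrable hε).mul_prod
      ((chiR_integrable hA hAm).mul_prod (chiR_integrable hA hAm))) hGm ?_
    filter_upwards with p
    exact le_of_eq (hGnorm p.1 p.2)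
  have hswap : ∫ z, Fc z = ∫ w : Euc n × Euc n, ∫ z, G z w := by
    rw [show Fc = fun z => ∫ w : Euc n × Euc n, G z w from funext hprod]
    exact integral_integral_swap hGint
  set c1 : ℝ := (Real.pi/ε) ^ ((n:ℝ)/2) with hc1def
  have hc1nn : 0 ≤ c1 := Real.rpow_nonneg (by positivity) _
  have hinner : ∀ w : Euc n × Euc n, (∫ z, G z w)
      = ((indR w.1 * indR w.2 * (c1 * Real.exp (-(‖w.1 - w.2‖^2 / (4*ε)))) : ℝ) : ℂ) := by
    intro w
    rw [hGdef]
    simp only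
    rw [integral_const_mul, gauss_fourier hε w.1 w.2, hχdef, hindRdef, chi_eq_ofReal, chi_eq_ofReal]
    push_cast
    ring
  set h : Euc n × Euc n → ℝ :=
    fun w => indR w.1 * indR w.2 * (c1 * Real.exp (-(‖w.1 - w.2‖^2 / (4*ε)))) with hhdef
  have hhnn : ∀ w, 0 ≤ h w := by
    intro w
    exact mul_nonneg (mul_nonneg (hindR01 w.1).1 (hindR01 w.2).1)
      (mul_nonneg hc1nn (Real.exp_pos _).le)
  have hJh : ∫ z, φ z = ∫ w : Euc n × Euc n, h w := by
    have h1 : ∫ z, φ z = (∫ z, Fc z).re := by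
      simp_rw [hpt]
      have := ContinuousLinearMap.integral_comp_comm Complex.reCLM hFcint
      simpa using this
    rw [h1, hswap, show (fun w : Euc n × Euc n => ∫ z, G z w)
      = fun w => ((h w : ℝ) : ℂ) from funext hinner,
      show ∫ w : Euc n × Euc n, ((h w : ℝ) : ℂ) = ((∫ w : Euc n × Euc n, h w : ℝ) : ℂ) from
        integral_ofReal, Complex.ofReal_re]
  -- final bound
  have hb4 : (0:ℝ) < (4*ε)⁻¹ := by positivity
  have hgauss2 : Integrable (fun t : Euc n => c1 * Real.exp (-((4*ε)⁻¹ * ‖t‖^2))) :=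
    (gauss_integrable hb4).const_mul c1
  have hmeasg : Measurable fun t : Euc n => ENNReal.ofReal (c1 * Real.exp (-((4*ε)⁻¹ * ‖t‖^2))) := by
    apply ENNReal.measurable_ofReal.comp
    exact (continuous_const.mul (Real.continuous_exp.comp
      (continuous_const.mul ((continuous_norm (E := Euc n)).pow 2)).neg)).measurable
  set c2 : ℝ := (Real.pi/((4*ε)⁻¹)) ^ ((n:ℝ)/2) with hc2def
  have hint2 : ∀ x : Euc n, ∫⁻ y, ENNReal.ofReal (c1 * Real.exp (-((4*ε)⁻¹ * ‖x - y‖^2)))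
      = ENNReal.ofReal (c1 * c2) := by
    intro x
    have hsub : MeasurePreserving (fun t : Euc n => x - t) volume volume := by
      have h1 := (measurePreserving_add_left (volume : Measure (Euc n)) x).comp
        (Measure.measurePreserving_neg (volume : Measure (Euc n)))
      simpa [Function.comp_def, sub_eq_add_neg] using h1
    have hmp := hsub.lintegral_comp hmeasg
    rw [show (fun y : Euc n => ENNReal.ofReal (c1 * Real.exp (-((4*ε)⁻¹ * ‖x - y‖^2))))
      = fun y : Euc n => (fun t : Euc n => ENNReal.ofReal (c1 * Real.exp (-((4*ε)⁻¹ * ‖t‖^2)))) (x - y)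
      from rfl]
    rw [hmp, ← ofReal_integral_eq_lintegral_ofReal hgauss2
      (ae_of_all _ fun t => mul_nonneg hc1nn (Real.exp_pos _).le)]
    rw [integral_const_mul, gauss_integral hb4, hc2def]
  have hhle : ∀ w : Euc n × Euc n,
      h w ≤ indR w.1 * (c1 * Real.exp (-((4*ε)⁻¹ * ‖w.1 - w.2‖^2))) := by
    intro w
    rw [hhdef]
    simp only
    rw [show -(‖w.1 - w.2‖^2/(4*ε)) = -((4*ε)⁻¹ * ‖w.1 - w.2‖^2) by ring]
    have h1 := hindR01 w.1
    have h2 := hindR01 w.2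
    have h3 : 0 ≤ c1 * Real.exp (-((4*ε)⁻¹ * ‖w.1 - w.2‖^2)) :=
      mul_nonneg hc1nn (Real.exp_pos _).le
    nlinarith [mul_nonneg (mul_nonneg h1.1 h3) (sub_nonneg.2 h2.2)]
  have hindA_lint : ∫⁻ x, ENNReal.ofReal (indR x) = volume A := by
    have heq : (fun x => ENNReal.ofReal (indR x)) = A.indicator (fun _ => (1:ℝ≥0∞)) := by
      funext x; by_cases hx : x ∈ A <;> simp [hindRdef, hx]
    rw [heq, lintegral_indicator hAm, setLIntegral_one]
  have houter : ∫⁻ w : Euc n × Euc n, ENNReal.ofReal (h w) ≤ volume A * ENNReal.ofReal (c1 * c2) := by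
    have hmono : ∫⁻ w : Euc n × Euc n, ENNReal.ofReal (h w)
        ≤ ∫⁻ w : Euc n × Euc n, ENNReal.ofReal (indR w.1)
            * ENNReal.ofReal (c1 * Real.exp (-((4*ε)⁻¹ * ‖w.1 - w.2‖^2))) := by
      apply lintegral_mono
      intro w
      dsimp only
      rw [← ENNReal.ofReal_mul (hindR01 w.1).1]
      exact ENNReal.ofReal_le_ofReal (hhle w)
    refine hmono.trans ?_
    have hmw : Measurable fun w : Euc n × Euc n => ENNReal.ofReal (indR w.1)
        * ENNReal.ofReal (c1 * Real.exp (-((4*ε)⁻¹ * ‖w.1 - w.2‖^2))) := by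
      refine (ENNReal.measurable_ofReal.comp (hindRm.comp measurable_fst)).mul ?_
      apply ENNReal.measurable_ofReal.comp
      exact (continuous_const.mul (Real.continuous_exp.comp
        (continuous_const.mul (((continuous_fst.sub continuous_snd).norm).pow 2)).neg)).measurable
    rw [MeasureTheory.Measure.volume_eq_prod, lintegral_prod _ hmw.aemeasurable]
    calc ∫⁻ x, ∫⁻ y, ENNReal.ofReal (indR x)
            * ENNReal.ofReal (c1 * Real.exp (-((4*ε)⁻¹ * ‖x - y‖^2)))
        = ∫⁻ x, ENNReal.ofReal (indR x)
            * ∫⁻ y, ENNReal.ofReal (c1 * Real.exp (-((4*ε)⁻¹ * ‖x - y‖^2))) := by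
          congr 1 with x
          rw [lintegral_const_mul _ (by
            apply ENNReal.measurable_ofReal.comp
            exact (continuous_const.mul (Real.continuous_exp.comp
              (continuous_const.mul (((continuous_const.sub continuous_id).norm).pow 2)).neg)).measurable)]
      _ = ∫⁻ x, ENNReal.ofReal (indR x) * ENNReal.ofReal (c1 * c2) := by
          congr 1 with x
          rw [hint2 x]
      _ = (∫⁻ x, ENNReal.ofReal (indR x)) * ENNReal.ofReal (c1 * c2) :=
          lintegral_mul_const _ (ENNReal.measurable_ofReal.comp hindRm)
      _ ≤ volume A * ENNReal.ofReal (c1 * c2) := le_of_eq (by rw [hindA_lint])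
  have hc1c2 : c1 * c2 = (2*Real.pi)^n := by
    rw [hc1def, hc2def, ← Real.mul_rpow (by positivity) (by positivity)]
    have he : Real.pi/ε * (Real.pi/((4*ε)⁻¹)) = (2*Real.pi)^2 := by
      field_simp
      ring
    rw [he, ← Real.rpow_natCast (2*Real.pi) 2, ← Real.rpow_mul (by positivity),
      show ((2:ℕ):ℝ) * ((n:ℝ)/2) = ((n:ℕ):ℝ) by push_cast; ring, Real.rpow_natCast]
  calc ∫⁻ z, ENNReal.ofReal (‖F z‖^2 * Real.exp (-(ε * ‖z‖^2)))
      = ENNReal.ofReal (∫ z, φ z) :=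
        (ofReal_integral_eq_lintegral_ofReal hφint (ae_of_all _ hφnn)).symm
    _ = ENNReal.ofReal (∫ w : Euc n × Euc n, h w) := by rw [hJh]
    _ ≤ ∫⁻ w : Euc n × Euc n, ENNReal.ofReal (h w) := by
        calc ENNReal.ofReal (∫ w : Euc n × Euc n, h w)
            ≤ (‖∫ w : Euc n × Euc n, h w‖₊ : ℝ≥0∞) := Real.ofReal_le_enorm _
          _ ≤ ∫⁻ w : Euc n × Euc n, (‖h w‖₊ : ℝ≥0∞) := enorm_integral_le_lintegral_enorm _
          _ = ∫⁻ w : Euc n × Euc n, ENNReal.ofReal (h w) :=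
              lintegral_congr fun w => Real.enorm_eq_ofReal (hhnn w)
    _ ≤ volume A * ENNReal.ofReal (c1 * c2) := houter
    _ = ENNReal.ofReal ((2*Real.pi)^n) * volume A := by rw [hc1c2, mul_comm]



end AuxLemmas

set_option maxHeartbeats 1000000 in
theorem stmt13 (n : ℕ) (hn : 1 ≤ n) (p q : ℝ) (hp : 1 < p) (hq : 1 < q)
    (hs : 2 ≤ max (rconj p) q)
    (u v : Euc n → ℝ) (hu : IsWeight u) (hv : IsWeight v)
    (C : ℝ) (hC : 0 < C)
    (hyp : ∀ E F : Set (Euc n),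
      IsBounded E → MeasurableSet E → IsBounded F → MeasurableSet F → 0 < volume F →
      wMeas u E ^ (1/q) ≤
        ENNReal.ofReal C * volume E ^ (1 / max (rconj p) q) *
          volume F ^ (-(1 / rconj (max (rconj p) q))) * wMeas v F ^ (1/p)) :
    ∃ C' : ℝ, 0 < C' ∧ ∀ A : Set (Euc n), IsBounded A → MeasurableSet A →
      ∀ α : ℝ, 0 < α →
      wMeas u {z : Euc n | α < ‖ftrans (A.indicator fun _ => (1 : ℂ)) z‖} ^ (1/q) ≤
        ENNReal.ofReal (C' / α) * wMeas v A ^ (1/p) := by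
  simp only [wMeas] at hyp ⊢
  have hq0 : (0:ℝ) < q := lt_trans one_pos hq
  have hp0 : (0:ℝ) < p := lt_trans one_pos hp
  set s := max (rconj p) q with hsdef
  have hs2 : (2:ℝ) ≤ s := hs
  have hs1 : (1:ℝ) < s := lt_of_lt_of_le one_lt_two hs2
  have hs0 : (0:ℝ) < s := lt_trans one_pos hs1
  have hrc : 1 / rconj s = 1 - 1/s := by
    rw [rconj]
    have h1 : s ≠ 0 := hs0.ne'
    have h2 : s - 1 ≠ 0 := sub_ne_zero.mpr hs1.ne'
    field_simp
  have h1s : 1/s ≤ 1/2 := by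
    apply one_div_le_one_div_of_le two_pos hs2
  set B : ℝ := (2*Real.pi)^n * Real.exp 1 with hBdef
  have hB0 : 0 < B := by positivity
  refine ⟨C * B ^ (1/s), by positivity, ?_⟩
  intro A hA hAm α hα
  set χ : Euc n → ℂ := A.indicator (fun _ => (1:ℂ)) with hχdef
  set E : Set (Euc n) := {z | α < ‖ftrans χ z‖} with hEdef
  have hEopen : IsOpen E := isOpen_lt continuous_const (ftrans_continuous hA hAm).norm
  rcases eq_empty_or_nonempty E with hE | hE
  · rw [hE, Measure.restrict_empty, lintegral_zero_measure,
      ENNReal.zero_rpow_of_pos (by positivity)]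
    exact zero_le
  obtain ⟨z₀, hz₀⟩ := hE
  have hz₀' : α < ‖ftrans χ z₀‖ := hz₀
  have hαM : α < (volume A).toReal := lt_of_lt_of_le hz₀' (ftrans_norm_le hA hAm z₀)
  have hAfin : volume A ≠ ⊤ := hA.measure_lt_top.ne
  have hA0 : volume A ≠ 0 := by
    intro h0
    rw [h0] at hαM
    simp at hαM
    linarith
  have hApos : 0 < volume A := zero_lt_iff.mpr hA0
  have hαA : ENNReal.ofReal α ≤ volume A := by
    rw [← ENNReal.ofReal_toReal hAfin]
    exact ENNReal.ofReal_le_ofReal hαM.le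
  have hαne : ENNReal.ofReal α ≠ 0 := (ENNReal.ofReal_pos.2 hα).ne'
  set W := (∫⁻ x in A, ENNReal.ofReal (v x)) ^ (1/p) with hWdef
  set RHS := ENNReal.ofReal (C * B ^ (1/s) / α) * W with hRdef
  have hd0 : 1/s + -(1/rconj s) ≤ 0 := by rw [hrc]; linarith
  have hk : ∀ k : ℕ, (∫⁻ x in E ∩ Metric.closedBall 0 ((k:ℝ)+1), ENNReal.ofReal (u x)) ≤ RHS ^ q := by
    intro k
    set r : ℝ := (k:ℝ)+1 with hrdef
    have hr0 : 0 < r := by positivity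
    set ε : ℝ := (r^2)⁻¹ with hεdef
    have hε : 0 < ε := by positivity
    set Ek := E ∩ Metric.closedBall (0 : Euc n) r with hEkdef
    have hEkb : IsBounded Ek := Metric.isBounded_closedBall.subset inter_subset_right
    have hEkm : MeasurableSet Ek := hEopen.measurableSet.inter measurableSet_closedBall
    have hvol : volume Ek ≤ ENNReal.ofReal (B / α^2) * volume A := by
      have hcheb : ENNReal.ofReal (α^2 * Real.exp (-1)) * volume Ek
          ≤ ENNReal.ofReal ((2*Real.pi)^n) * volume A := by
        calc ENNReal.ofReal (α^2 * Real.exp (-1)) * volume Ek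
            = ∫⁻ _ in Ek, ENNReal.ofReal (α^2 * Real.exp (-1)) := (setLIntegral_const _ _).symm
          _ ≤ ∫⁻ z in Ek, ENNReal.ofReal (‖ftrans χ z‖^2 * Real.exp (-(ε * ‖z‖^2))) := by
              apply setLIntegral_mono
              · apply ENNReal.measurable_ofReal.comp
                exact (((ftrans_continuous hA hAm).norm.pow 2).mul (Real.continuous_exp.comp
                  (continuous_const.mul ((continuous_norm (E := Euc n)).pow 2)).neg)).measurable
              · intro z hz
                apply ENNReal.ofReal_le_ofReal
                obtain ⟨hz1, hz2⟩ := hz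
                have hz1' : α < ‖ftrans χ z‖ := hz1
                have h1 : α^2 ≤ ‖ftrans χ z‖^2 := by nlinarith
                have hzr : ‖z‖ ≤ r := by
                  rw [Metric.mem_closedBall, dist_zero_right] at hz2
                  exact hz2
                have h2 : Real.exp (-1) ≤ Real.exp (-(ε * ‖z‖^2)) := by
                  apply Real.exp_le_exp.2
                  have hle : ε * ‖z‖^2 ≤ 1 := by
                    rw [hεdef]
                    rw [inv_mul_le_iff₀ (by positivity), mul_one]
                    nlinarith [norm_nonneg z]
                  linarith
                have h3 : (0:ℝ) ≤ α^2 := sq_nonneg α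
                nlinarith [Real.exp_pos (-(ε * ‖z‖^2))]
          _ ≤ ∫⁻ z, ENNReal.ofReal (‖ftrans χ z‖^2 * Real.exp (-(ε * ‖z‖^2))) :=
              setLIntegral_le_lintegral _ _
          _ ≤ ENNReal.ofReal ((2*Real.pi)^n) * volume A := keyL2 hA hAm hε
      have hc0 : ENNReal.ofReal (α^2 * Real.exp (-1)) ≠ 0 := (ENNReal.ofReal_pos.2 (by positivity)).ne'
      have hcT : ENNReal.ofReal (α^2 * Real.exp (-1)) ≠ ⊤ := ENNReal.ofReal_ne_top
      calc volume Ek = (ENNReal.ofReal (α^2 * Real.exp (-1)))⁻¹ *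
            (ENNReal.ofReal (α^2 * Real.exp (-1)) * volume Ek) := by
            rw [← mul_assoc, ENNReal.inv_mul_cancel hc0 hcT, one_mul]
        _ ≤ (ENNReal.ofReal (α^2 * Real.exp (-1)))⁻¹ *
            (ENNReal.ofReal ((2*Real.pi)^n) * volume A) := mul_le_mul_right hcheb _
        _ = ENNReal.ofReal (B / α^2) * volume A := by
            rw [← mul_assoc]
            congr 1
            rw [← ENNReal.ofReal_inv_of_pos (by positivity), ← ENNReal.ofReal_mul (by positivity)]
            congr 1
            rw [hBdef, Real.exp_neg]
            field_simp
    have hmain := hyp Ek A hEkb hEkm hA hAm hApos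
    have hstep : (∫⁻ x in Ek, ENNReal.ofReal (u x)) ^ (1/q) ≤ RHS := by
      have h3 : volume Ek ^ (1/s) ≤ (ENNReal.ofReal (B/α^2)) ^ (1/s) * volume A ^ (1/s) := by
        calc volume Ek ^ (1/s) ≤ (ENNReal.ofReal (B/α^2) * volume A) ^ (1/s) :=
            ENNReal.rpow_le_rpow hvol (by positivity)
          _ = _ := ENNReal.mul_rpow_of_nonneg _ _ (by positivity)
      have hmono : volume A ^ (1/s + -(1/rconj s)) ≤ (ENNReal.ofReal α) ^ (1/s + -(1/rconj s)) := by
        rw [show (1/s + -(1/rconj s)) = -(-(1/s + -(1/rconj s))) by ring,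
          ENNReal.rpow_neg (volume A), ENNReal.rpow_neg (ENNReal.ofReal α)]
        exact ENNReal.inv_le_inv.2 (ENNReal.rpow_le_rpow hαA (by linarith))
      calc (∫⁻ x in Ek, ENNReal.ofReal (u x)) ^ (1/q)
          ≤ ENNReal.ofReal C * volume Ek ^ (1/s) * volume A ^ (-(1/rconj s)) * W := hmain
        _ ≤ ENNReal.ofReal C * ((ENNReal.ofReal (B/α^2)) ^ (1/s) * volume A ^ (1/s))
            * volume A ^ (-(1/rconj s)) * W :=
            mul_le_mul_left (mul_le_mul_left (mul_le_mul_right h3 _) _) _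
        _ = ENNReal.ofReal C * (ENNReal.ofReal (B/α^2)) ^ (1/s)
            * (volume A ^ (1/s) * volume A ^ (-(1/rconj s))) * W := by ring
        _ = ENNReal.ofReal C * (ENNReal.ofReal (B/α^2)) ^ (1/s)
            * volume A ^ (1/s + -(1/rconj s)) * W := by
            rw [ENNReal.rpow_add _ _ hA0 hAfin]
        _ ≤ ENNReal.ofReal C * (ENNReal.ofReal (B/α^2)) ^ (1/s)
            * (ENNReal.ofReal α) ^ (1/s + -(1/rconj s)) * W :=
            mul_le_mul_left (mul_le_mul_right hmono _) _
        _ = RHS := by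
            rw [hRdef]
            congr 1
            have hBα : (B/α^2) ^ (1/s) = B ^ (1/s) * α ^ (-(2/s)) := by
              rw [Real.div_rpow hB0.le (by positivity), Real.rpow_neg hα.le, div_eq_mul_inv]
              congr 2
              rw [← Real.rpow_natCast α 2, ← Real.rpow_mul hα.le,
                show ((2:ℕ):ℝ) * (1/s) = 2/s by push_cast; ring]
            rw [ENNReal.ofReal_rpow_of_pos (by positivity : (0:ℝ) < B/α^2),
              ENNReal.ofReal_rpow_of_pos hα, mul_assoc,
              ← ENNReal.ofReal_mul (by positivity), ← ENNReal.ofReal_mul hC.le]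
            congr 1
            rw [hBα, mul_assoc, ← Real.rpow_add hα,
              show -(2/s) + (1/s + -(1/rconj s)) = -1 by rw [hrc]; ring,
              Real.rpow_neg_one]
            ring
    have := ENNReal.rpow_le_rpow hstep hq0.le
    rwa [← ENNReal.rpow_mul, one_div_mul_cancel hq0.ne', ENNReal.rpow_one] at this
  -- supremum over k
  set μ' := (volume : Measure (Euc n)).withDensity (fun x => ENNReal.ofReal (u x)) with hμ'def
  have hwm : ∀ S : Set (Euc n), MeasurableSet S →
      (∫⁻ x in S, ENNReal.ofReal (u x)) = μ' S := by
    intro S hS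
    rw [hμ'def, withDensity_apply _ hS]
  have hEunion : E = ⋃ k : ℕ, E ∩ Metric.closedBall (0:Euc n) ((k:ℝ)+1) := by
    ext z
    constructor
    · intro hz
      obtain ⟨k, hkz⟩ := exists_nat_ge ‖z‖
      refine mem_iUnion.2 ⟨k, hz, ?_⟩
      rw [Metric.mem_closedBall, dist_zero_right]
      linarith
    · intro hz
      rcases mem_iUnion.1 hz with ⟨k, hkz⟩
      exact hkz.1
  have hsup : μ' E = ⨆ k : ℕ, μ' (E ∩ Metric.closedBall 0 ((k:ℝ)+1)) := by
    conv_lhs => rw [hEunion]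
    apply Directed.measure_iUnion
    apply Monotone.directed_le
    intro i j hij
    apply inter_subset_inter_right
    apply Metric.closedBall_subset_closedBall
    have : (i:ℝ) ≤ (j:ℝ) := Nat.cast_le.2 hij
    linarith
  have hfinal : (∫⁻ x in E, ENNReal.ofReal (u x)) ≤ RHS ^ q := by
    rw [hwm E hEopen.measurableSet, hsup]
    apply iSup_le
    intro k
    rw [← hwm _ (hEopen.measurableSet.inter measurableSet_closedBall)]
    exact hk k
  calc (∫⁻ x in E, ENNReal.ofReal (u x)) ^ (1/q)
      ≤ (RHS ^ q) ^ (1/q) := ENNReal.rpow_le_rpow hfinal (by positivity)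
    _ = RHS := by rw [← ENNReal.rpow_mul, mul_one_div_cancel hq0.ne', ENNReal.rpow_one]
end
end
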